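/- arXiv:2408.04602 — 6 statements merged into one kernel-verified Lean document; each statement's English description precedes it below -/
import Mathlib

section
/- Let Ω ⊂ ℝ^N be a bounded domain (open and connected) and let f : Ω̄×Ω̄ → ℝ be continuous. Assume that every point (x,x) of the diagonal set {(x,y) ∈ Ω̄×Ω̄ : x = y} is a (not necessarily strict) local minimum point of f, i.e. for each x ∈ Ω̄ there is a neighborhood U of (x,x) in Ω̄×Ω̄ with f(z) ≥ f(x,x) for all z ∈ U. Then the function x ↦ f(x,x) is constant on Ω̄. -/
open MeasureTheory Filter Set Metric Topology
open scoped ENNReal NNReal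

noncomputable section

abbrev EucN (N : ℕ) : Type := EuclideanSpace ℝ (Fin N)

variable {N : ℕ}

/-- A two-variable exponent is symmetric. -/
def SymmFun (f : EucN N → EucN N → ℝ) : Prop := ∀ x y, f x y = f y x

/-- `Φ⁺` for a two-variable exponent, over `A × A`. -/
def sup2 (A : Set (EucN N)) (f : EucN N → EucN N → ℝ) : ℝ := sSup (Set.image2 f A A)

/-- `Φ⁻` for a two-variable exponent, over `A × A`. -/
def inf2 (A : Set (EucN N)) (f : EucN N → EucN N → ℝ) : ℝ := sInf (Set.image2 f A A)

/-- `Φ⁺` for a one-variable exponent. -/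
def sup1 (A : Set (EucN N)) (f : EucN N → ℝ) : ℝ := sSup (f '' A)

/-- `Φ⁻` for a one-variable exponent. -/
def inf1 (A : Set (EucN N)) (f : EucN N → ℝ) : ℝ := sInf (f '' A)

/-- log-Hölder continuity on a set. -/
def LogHolderOn {X : Type*} [PseudoMetricSpace X] (f : X → ℝ) (A : Set X) : Prop :=
  ∃ C > 0, ∀ z ∈ A, ∀ w ∈ A, 0 < dist z w → dist z w < 1 →
    |f z - f w| * Real.log (1 / dist z w) ≤ C

/-- γ-Hölder continuity on a set. -/
def HolderOn {X : Type*} [PseudoMetricSpace X] (γ : ℝ) (f : X → ℝ) (A : Set X) : Prop :=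
  ∃ L > 0, ∀ z ∈ A, ∀ w ∈ A, |f z - f w| ≤ L * dist z w ^ γ

/-- A bounded Lipschitz domain: bounded, open, connected, and near every boundary point,
after choosing a unit direction `ν`, the domain is the subgraph of a Lipschitz function of
the orthogonal component. -/
def IsLipschitzDomain (Ω : Set (EucN N)) : Prop :=
  IsOpen Ω ∧ IsConnected Ω ∧ Bornology.IsBounded Ω ∧
  ∀ x ∈ frontier Ω, ∃ U : Set (EucN N), IsOpen U ∧ x ∈ U ∧
    ∃ (ν : EucN N) (f : EucN N → ℝ) (L : ℝ≥0), ‖ν‖ = 1 ∧ LipschitzWith L f ∧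
      ∀ y ∈ U, (y ∈ Ω ↔ (inner ℝ y ν : ℝ) < f (y - (inner ℝ y ν : ℝ) • ν))

/-- The Nakano modular `∫_Ω |u|^{q(x)} dx`. -/
def nakanoModular (Ω : Set (EucN N)) (q u : EucN N → ℝ) : ℝ≥0∞ :=
  ∫⁻ x in Ω, ENNReal.ofReal (|u x| ^ q x)

/-- The Luxemburg norm of `L^{q(x)}(Ω)` (with value `∞` if no admissible `λ` exists). -/
def luxNorm (Ω : Set (EucN N)) (q u : EucN N → ℝ) : ℝ≥0∞ :=
  sInf {l : ℝ≥0∞ | 0 < l ∧ l ≠ ⊤ ∧ nakanoModular Ω q (fun x => u x / l.toReal) ≤ 1}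

/-- Membership in the Nakano space `L^{q(x)}(Ω)`. -/
def MemNakano (Ω : Set (EucN N)) (q u : EucN N → ℝ) : Prop :=
  Measurable u ∧ luxNorm Ω q u ≠ ⊤

/-- The modular of the variable-order Sobolev space `W^{s(x,y),p(x,y)}(Ω)`. -/
def sobModular (Ω : Set (EucN N)) (s p : EucN N → EucN N → ℝ) (u : EucN N → ℝ) : ℝ≥0∞ :=
  (∫⁻ x in Ω, ∫⁻ y in Ω,
    ENNReal.ofReal (|u x - u y| ^ p x y / dist x y ^ ((N : ℝ) + s x y * p x y))) +
  ∫⁻ x in Ω, ENNReal.ofReal (|u x| ^ p x x)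

/-- The Luxemburg norm `‖u‖_{s,p;Ω}` (with value `∞` if no admissible `λ` exists). -/
def sobNorm (Ω : Set (EucN N)) (s p : EucN N → EucN N → ℝ) (u : EucN N → ℝ) : ℝ≥0∞ :=
  sInf {l : ℝ≥0∞ | 0 < l ∧ l ≠ ⊤ ∧ sobModular Ω s p (fun x => u x / l.toReal) ≤ 1}

/-- Membership in `W^{s(x,y),p(x,y)}(Ω)`. -/
def MemW (Ω : Set (EucN N)) (s p : EucN N → EucN N → ℝ) (u : EucN N → ℝ) : Prop :=
  Measurable u ∧ sobNorm Ω s p u ≠ ⊤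

/-- `φ ∈ C_c^∞(Ω)`. -/
def SmoothCompactIn (Ω : Set (EucN N)) (φ : EucN N → ℝ) : Prop :=
  ContDiff ℝ (⊤ : ℕ∞) φ ∧ HasCompactSupport φ ∧ tsupport φ ⊆ Ω

/-- Membership in `W_0^{s(x,y),p(x,y)}(Ω)`: the closure of `C_c^∞(Ω)` in `‖·‖_{s,p;Ω}`. -/
def MemW0 (Ω : Set (EucN N)) (s p : EucN N → EucN N → ℝ) (u : EucN N → ℝ) : Prop :=
  MemW Ω s p u ∧ ∃ φ : ℕ → EucN N → ℝ, (∀ n, SmoothCompactIn Ω (φ n)) ∧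
    Tendsto (fun n => sobNorm Ω s p (fun x => u x - φ n x)) atTop (𝓝 0)

/-- The critical Sobolev exponent `p_s^*(x) = N p(x,x)/(N − p(x,x) s(x,x))`. -/
def pCrit (s p : EucN N → EucN N → ℝ) (x : EucN N) : ℝ :=
  (N : ℝ) * p x x / ((N : ℝ) - p x x * s x x)

/-- The Choquard double integral `∫_Ω∫_Ω |u(x)|^{r(x)}|u(y)|^{r(y)}/|x−y|^{(α(x)+α(y))/2}`. -/
def choquardE (Ω : Set (EucN N)) (α r : EucN N → ℝ) (u : EucN N → ℝ) : ℝ≥0∞ :=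
  ∫⁻ x in Ω, ∫⁻ y in Ω,
    ENNReal.ofReal (|u x| ^ r x * |u y| ^ r y / dist x y ^ ((α x + α y) / 2))

/-- The energy functional `I` associated with the Choquard equation. -/
def energyI (Ω : Set (EucN N)) (s p : EucN N → EucN N → ℝ) (α r : EucN N → ℝ)
    (u : EucN N → ℝ) : ℝ :=
  (∫⁻ x in Ω, ∫⁻ y in Ω,
    ENNReal.ofReal (|u x - u y| ^ p x y / (p x y * dist x y ^ ((N : ℝ) + s x y * p x y)))).toReal
  + (∫⁻ x in Ω, ENNReal.ofReal (|u x| ^ p x x / p x x)).toReal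
  - (∫⁻ x in Ω, ∫⁻ y in Ω,
      ENNReal.ofReal (|u x| ^ r x * |u y| ^ r y / (2 * r x * dist x y ^ ((α x + α y) / 2)))).toReal

/-- `D[u] = I'[u](u) = ϱ(u) − ∫∫ |u|^{r(x)}|u|^{r(y)}/|x−y|^{(α(x)+α(y))/2}`. -/
def energyD (Ω : Set (EucN N)) (s p : EucN N → EucN N → ℝ) (α r : EucN N → ℝ)
    (u : EucN N → ℝ) : ℝ :=
  (sobModular Ω s p u).toReal - (choquardE Ω α r u).toReal

/-- The Gagliardo modular. -/
def gagModular (Q : Set (EucN N)) (s p : EucN N → EucN N → ℝ) (u : EucN N → ℝ) : ℝ≥0∞ :=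
  ∫⁻ x in Q, ∫⁻ y in Q,
    ENNReal.ofReal (|u x - u y| ^ p x y / dist x y ^ ((N : ℝ) + s x y * p x y))

/-- The Gagliardo–Luxemburg seminorm `[v]_{s(x,y),p(x,y);Q}`. -/
def gagSemi (Q : Set (EucN N)) (s p : EucN N → EucN N → ℝ) (u : EucN N → ℝ) : ℝ≥0∞ :=
  sInf {l : ℝ≥0∞ | 0 < l ∧ l ≠ ⊤ ∧ gagModular Q s p (fun x => u x / l.toReal) ≤ 1}

/-- The rescaled test functions `φ_n(x) = n^{(N−p(x)s(x))/p(x)} φ(nx)`. -/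
def testFn (p s : EucN N → EucN N → ℝ) (φ : EucN N → ℝ) (n : ℕ) (x : EucN N) : ℝ :=
  (n : ℝ) ^ (((N : ℝ) - p x x * s x x) / p x x) * φ ((n : ℝ) • x)

/-- if every diagonal point is a local minimum of `f` on `Ω̄ × Ω̄`,
then `x ↦ f(x,x)` is constant on `Ω̄`. -/
theorem stmt5 {N : ℕ} (Ω : Set (EucN N)) (hopen : IsOpen Ω) (hconn : IsConnected Ω)
    (hbdd : Bornology.IsBounded Ω)
    (f : EucN N × EucN N → ℝ) (hf : ContinuousOn f ((closure Ω) ×ˢ (closure Ω)))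
    (hmin : ∀ x ∈ closure Ω, ∃ ε > 0, ∀ z ∈ (closure Ω) ×ˢ (closure Ω),
      dist z (x, x) < ε → f (x, x) ≤ f z) :
    ∀ x ∈ closure Ω, ∀ y ∈ closure Ω, f (x, x) = f (y, y) := by
  classical
  set S := closure Ω with hSdef
  set g : EucN N → ℝ := fun x => f (x, x) with hgdef
  have hgc : ContinuousOn g S := by
    have hd : ContinuousOn (fun x : EucN N => (x, x)) S :=
      (continuous_id.prodMk continuous_id).continuousOn
    exact hf.comp hd (fun x hx => ⟨hx, hx⟩)
  have hmin' : ∀ x ∈ S, ∃ ε > 0, ∀ y ∈ S, dist y x < ε → g x ≤ g y := by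
    intro x hx
    obtain ⟨ε, hε, h⟩ := hmin x hx
    exact ⟨ε, hε, fun y hy hd => h (y, y) ⟨hy, hy⟩ (by simpa [Prod.dist_eq] using hd)⟩
  obtain ⟨b, hbc, -, hbasis⟩ := TopologicalSpace.exists_countable_basis (EucN N)
  have hsub : g '' S ⊆ ⋃ t ∈ b, {sInf (g '' (S ∩ t))} := by
    rintro v ⟨x, hx, rfl⟩
    obtain ⟨ε, hε, h⟩ := hmin' x hx
    obtain ⟨t, htb, hxt, hts⟩ :=
      hbasis.exists_subset_of_mem_open (mem_ball_self hε) isOpen_ball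
    refine mem_iUnion₂.2 ⟨t, htb, ?_⟩
    have hlb : ∀ w ∈ g '' (S ∩ t), g x ≤ w := by
      rintro w ⟨y, ⟨hyS, hyt⟩, rfl⟩
      exact h y hyS (mem_ball.1 (hts hyt))
    have hmem : g x ∈ g '' (S ∩ t) := ⟨x, ⟨hx, hxt⟩, rfl⟩
    simp only [mem_singleton_iff]
    exact (le_antisymm (le_csInf ⟨_, hmem⟩ hlb) (csInf_le ⟨g x, hlb⟩ hmem))
  have hcount : (g '' S).Countable :=
    Set.Countable.mono hsub (hbc.biUnion (fun _ _ => countable_singleton _))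
  have hconnS : IsPreconnected S := hconn.isPreconnected.closure
  have himg : IsPreconnected (g '' S) := hconnS.image g hgc
  have hord := himg.ordConnected
  intro x hx y hy
  by_contra hne
  have hxm : g x ∈ g '' S := ⟨x, hx, rfl⟩
  have hym : g y ∈ g '' S := ⟨y, hy, rfl⟩
  set a := min (g x) (g y) with ha
  set c := max (g x) (g y) with hc
  have hac : a < c := min_lt_max.2 hne
  have haS : a ∈ g '' S := by
    rcases min_choice (g x) (g y) with h | h <;> rw [ha, h] <;> assumption
  have hcS : c ∈ g '' S := by
    rcases max_choice (g x) (g y) with h | h <;> rw [hc, h] <;> assumption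
  have hIcc : Set.Icc a c ⊆ g '' S := hord.out haS hcS
  have h0 : volume (g '' S) = 0 := hcount.measure_zero volume
  have h1 : volume (Set.Icc a c) ≤ 0 := h0 ▸ measure_mono hIcc
  rw [Real.volume_Icc] at h1
  have : (0 : ℝ≥0∞) < ENNReal.ofReal (c - a) := by
    simpa using ENNReal.ofReal_pos.2 (sub_pos.2 hac)
  exact absurd (le_antisymm h1 this.le) this.ne'
end
end

section
/- Let Ω ⊂ ℝ^N be a bounded domain, and let p, s : Ω̄×Ω̄ → ℝ be symmetric log-Hölder continuous functions with 0 < s^- ≤ s^+ < 1 < p^- ≤ p^+ < N/s^+. Let x_0 ∈ Ω, β ∈ (0,1), C_0 > 0 and η ∈ (0,1) be such that B_η(x_0) ⊂ Ω and for every ρ ∈ (0,η): sup_{x∈∂B_ρ(x_0)} q(x) ≤ inf_{x∈∂B_ρ(x_0)} p_s^*(x) − C_0/(−log ρ)^β, where q : Ω → ℝ is a given function. Then there exists ε_0 ∈ (0,1/2) such that for every ε ∈ (0,ε_0) and every integer n ≥ 1 with ε^n < η, the annulus A_n := {x ∈ ℝ^N : ε^{n+1} < |x−x_0| < ε^n}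 satisfies sup_{A_n} q ≤ inf_{A_n} p_s^* − (C_0/2)/((n+1)^β·(log(1/ε))^β). -/
open MeasureTheory Filter Set Metric Topology
open scoped ENNReal NNReal

noncomputable section

variable {N : ℕ}

lemma logHolder_continuousOn {X : Type*} [MetricSpace X] {f : X → ℝ} {A : Set X}
    (h : LogHolderOn f A) : ContinuousOn f A := by
  obtain ⟨C, hC, h⟩ := h
  rw [Metric.continuousOn_iff]
  intro a ha ε hε
  refine ⟨min (1/2) (Real.exp (-(2*C/ε))), lt_min (by norm_num) (Real.exp_pos _), ?_⟩
  intro z hz hd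
  rcases eq_or_lt_of_le (dist_nonneg (x := z) (y := a)) with h0 | h0
  · have : z = a := dist_eq_zero.mp h0.symm
    simpa [this] using hε
  have hd1 : dist z a < 1 := hd.trans_le ((min_le_left _ _).trans (by norm_num))
  have key := h z hz a ha h0 hd1
  have hlog : 2*C/ε < Real.log (1 / dist z a) := by
    have h2 : dist z a < Real.exp (-(2*C/ε)) := hd.trans_le (min_le_right _ _)
    have h3 := Real.log_lt_log h0 h2
    rw [Real.log_exp] at h3
    rw [one_div, Real.log_inv]
    linarith
  rw [Real.dist_eq]
  by_contra hcon
  push_neg at hcon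
  have hL0 : (0:ℝ) < Real.log (1 / dist z a) := lt_trans (by positivity) hlog
  have h4 : ε * (2*C/ε) < ε * Real.log (1 / dist z a) :=
    mul_lt_mul_of_pos_left hlog hε
  have h5 : ε * (2*C/ε) = 2*C := by field_simp
  have h6 : ε * Real.log (1 / dist z a) ≤ |f z - f a| * Real.log (1 / dist z a) :=
    mul_le_mul_of_nonneg_right hcon hL0.le
  linarith

set_option maxHeartbeats 2000000

/-- from the sphere-wise rate condition to a rate condition on dyadic-type
annuli `A_n = {ε^{n+1} < |x−x₀| < ε^n}`. -/
theorem stmt9 {N : ℕ} (Ω : Set (EucN N)) (hopen : IsOpen Ω) (hconn : IsConnected Ω)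
    (hbdd : Bornology.IsBounded Ω)
    (s p : EucN N → EucN N → ℝ) (hssymm : SymmFun s) (hpsymm : SymmFun p)
    (hslog : LogHolderOn (fun z : EucN N × EucN N => s z.1 z.2) ((closure Ω) ×ˢ (closure Ω)))
    (hplog : LogHolderOn (fun z : EucN N × EucN N => p z.1 z.2) ((closure Ω) ×ˢ (closure Ω)))
    (hs0 : 0 < inf2 (closure Ω) s) (hs2 : inf2 (closure Ω) s ≤ sup2 (closure Ω) s)
    (hs1 : sup2 (closure Ω) s < 1)
    (hp1 : 1 < inf2 (closure Ω) p) (hp2 : inf2 (closure Ω) p ≤ sup2 (closure Ω) p)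
    (hpN : sup2 (closure Ω) p < (N : ℝ) / sup2 (closure Ω) s)
    (q : EucN N → ℝ) (x0 : EucN N) (hx0 : x0 ∈ Ω) (β C0 η : ℝ)
    (hβ0 : 0 < β) (hβ1 : β < 1) (hC0 : 0 < C0) (hη0 : 0 < η) (hη1 : η < 1)
    (hball : ball x0 η ⊆ Ω)
    (hrate : ∀ ρ : ℝ, 0 < ρ → ρ < η →
      sSup (q '' sphere x0 ρ) ≤ sInf (pCrit s p '' sphere x0 ρ) - C0 / (-Real.log ρ) ^ β) :
    ∃ ε0 : ℝ, 0 < ε0 ∧ ε0 < 1 / 2 ∧ ∀ ε : ℝ, 0 < ε → ε < ε0 → ∀ n : ℕ, 1 ≤ n → ε ^ n < η →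
      sSup (q '' {x : EucN N | ε ^ (n + 1) < dist x x0 ∧ dist x x0 < ε ^ n}) ≤
        sInf (pCrit s p '' {x : EucN N | ε ^ (n + 1) < dist x x0 ∧ dist x x0 < ε ^ n}) -
          (C0 / 2) / (((n : ℝ) + 1) ^ β * Real.log (1 / ε) ^ β) := by
  classical
  rcases Nat.eq_zero_or_pos N with h0 | hNpos
  · subst h0
    exfalso
    rw [Nat.cast_zero, zero_div] at hpN
    linarith
  haveI : Nontrivial (EucN N) := by
    refine ⟨EuclideanSpace.single ⟨0, hNpos⟩ 1, 0, fun he => ?_⟩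
    have := congrArg (fun v => v ⟨0, hNpos⟩) he
    simp at this
  have hN0 : (0:ℝ) < (N:ℝ) := by exact_mod_cast hNpos
  set K := closure Ω with hKdef
  have hKc : IsCompact K := Metric.isCompact_of_isClosed_isBounded isClosed_closure hbdd.closure
  obtain ⟨Cp, hCp, hplog'⟩ := hplog
  obtain ⟨Cs, hCs, hslog'⟩ := hslog
  have hpc : ContinuousOn (fun z : EucN N × EucN N => p z.1 z.2) (K ×ˢ K) :=
    logHolder_continuousOn ⟨Cp, hCp, hplog'⟩
  have hsc : ContinuousOn (fun z : EucN N × EucN N => s z.1 z.2) (K ×ˢ K) :=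
    logHolder_continuousOn ⟨Cs, hCs, hslog'⟩
  have hPcomp : IsCompact (Set.image2 p K K) := by
    rw [← Set.image_prod]; exact (hKc.prod hKc).image_of_continuousOn hpc
  have hScomp : IsCompact (Set.image2 s K K) := by
    rw [← Set.image_prod]; exact (hKc.prod hKc).image_of_continuousOn hsc
  have hpmem : ∀ x ∈ K, ∀ y ∈ K, inf2 K p ≤ p x y ∧ p x y ≤ sup2 K p := by
    intro x hx y hy
    exact ⟨csInf_le hPcomp.bddBelow (Set.mem_image2_of_mem hx hy),
           le_csSup hPcomp.bddAbove (Set.mem_image2_of_mem hx hy)⟩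
  have hsmem : ∀ x ∈ K, ∀ y ∈ K, inf2 K s ≤ s x y ∧ s x y ≤ sup2 K s := by
    intro x hx y hy
    exact ⟨csInf_le hScomp.bddBelow (Set.mem_image2_of_mem hx hy),
           le_csSup hScomp.bddAbove (Set.mem_image2_of_mem hx hy)⟩
  have hSM0 : 0 < sup2 K s := hs0.trans_le hs2
  have hPM0 : (1:ℝ) < sup2 K p := hp1.trans_le hp2
  have hc : 0 < (N:ℝ) - sup2 K p * sup2 K s := by
    have := (lt_div_iff₀ hSM0).mp hpN
    linarith
  -- facts about the diagonal values
  have hfacts : ∀ x ∈ K, 1 < p x x ∧ p x x ≤ sup2 K p ∧ 0 < s x x ∧ s x x ≤ sup2 K s ∧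
      (N:ℝ) - sup2 K p * sup2 K s ≤ (N:ℝ) - p x x * s x x ∧ (N:ℝ) - p x x * s x x ≤ (N:ℝ) := by
    intro x hx
    obtain ⟨hp_lb, hp_ub⟩ := hpmem x hx x hx
    obtain ⟨hs_lb, hs_ub⟩ := hsmem x hx x hx
    have h1 : 1 < p x x := lt_of_lt_of_le hp1 hp_lb
    have h2 : 0 < s x x := lt_of_lt_of_le hs0 hs_lb
    refine ⟨h1, hp_ub, h2, hs_ub, ?_, ?_⟩
    · have := mul_le_mul hp_ub hs_ub h2.le (by linarith : (0:ℝ) ≤ sup2 K p)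
      linarith
    · have := mul_pos (by linarith : (0:ℝ) < p x x) h2
      linarith
  have hPcrit_ge : ∀ x ∈ K, inf2 K p ≤ pCrit s p x := by
    intro x hx
    obtain ⟨h1, h2, h3, h4, h5, h6⟩ := hfacts x hx
    have hD0 : 0 < (N:ℝ) - p x x * s x x := lt_of_lt_of_le hc h5
    have hkey : p x x ≤ pCrit s p x := by
      have e1 : (N:ℝ) * p x x / (N:ℝ) = p x x := by field_simp
      calc p x x = (N:ℝ) * p x x / (N:ℝ) := e1.symm
        _ ≤ (N:ℝ) * p x x / ((N:ℝ) - p x x * s x x) := by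
            apply div_le_div_of_nonneg_left (by positivity) hD0 h6
        _ = pCrit s p x := rfl
    linarith [(hpmem x hx x hx).1]
  -- the log-Hölder estimate for pCrit
  set Cstar := (N:ℝ) * ((N:ℝ)*Cp + (sup2 K p)^2*Cs) / (((N:ℝ) - sup2 K p * sup2 K s)*((N:ℝ) - sup2 K p * sup2 K s)) with hCstardef
  have hCstar : 0 < Cstar := by
    apply div_pos
    · have h1 : 0 < (N:ℝ)*Cp := by positivity
      have h2 := mul_nonneg (sq_nonneg (sup2 K p)) hCs.le
      exact mul_pos hN0 (by linarith)
    · positivity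
  have hpcrit_diff : ∀ x ∈ K, ∀ y ∈ K, 0 < dist x y → dist x y < 1 →
      |pCrit s p x - pCrit s p y| ≤ Cstar / Real.log (1 / dist x y) := by
    intro x hx y hy hd0 hd1
    have hL : 0 < Real.log (1 / dist x y) := Real.log_pos (one_lt_one_div hd0 hd1)
    have hdist : dist ((x,x) : EucN N × EucN N) ((y,y) : EucN N × EucN N) = dist x y := by
      rw [Prod.dist_eq]; simp
    have hΔP : |p x x - p y y| ≤ Cp / Real.log (1 / dist x y) := by
      have h := hplog' (x,x) ⟨hx,hx⟩ (y,y) ⟨hy,hy⟩ (by rw [hdist]; exact hd0) (by rw [hdist]; exact hd1)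
      rw [hdist] at h
      exact (le_div_iff₀ hL).mpr h
    have hΔS : |s x x - s y y| ≤ Cs / Real.log (1 / dist x y) := by
      have h := hslog' (x,x) ⟨hx,hx⟩ (y,y) ⟨hy,hy⟩ (by rw [hdist]; exact hd0) (by rw [hdist]; exact hd1)
      rw [hdist] at h
      exact (le_div_iff₀ hL).mpr h
    obtain ⟨hx1, hx2, hx3, hx4, hx5, hx6⟩ := hfacts x hx
    obtain ⟨hy1, hy2, hy3, hy4, hy5, hy6⟩ := hfacts y hy
    have hDx0 : 0 < (N:ℝ) - p x x * s x x := lt_of_lt_of_le hc hx5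
    have hDy0 : 0 < (N:ℝ) - p y y * s y y := lt_of_lt_of_le hc hy5
    have heq : pCrit s p x - pCrit s p y
        = (N:ℝ) * ((N:ℝ)*(p x x - p y y) + p x x * p y y * (s x x - s y y))
          / (((N:ℝ) - p x x * s x x) * ((N:ℝ) - p y y * s y y)) := by
      show (N:ℝ) * p x x / ((N:ℝ) - p x x * s x x) - (N:ℝ) * p y y / ((N:ℝ) - p y y * s y y) = _
      field_simp
      ring
    rw [heq, abs_div]
    have hnum : |(N:ℝ) * ((N:ℝ)*(p x x - p y y) + p x x * p y y * (s x x - s y y))|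
        ≤ (N:ℝ) * ((N:ℝ)*(Cp / Real.log (1 / dist x y)) + (sup2 K p)^2*(Cs / Real.log (1 / dist x y))) := by
      rw [abs_mul, abs_of_nonneg hN0.le]
      have t1 : |(N:ℝ)*(p x x - p y y) + p x x * p y y * (s x x - s y y)|
          ≤ (N:ℝ)*|p x x - p y y| + (sup2 K p)^2 * |s x x - s y y| := by
        calc |(N:ℝ)*(p x x - p y y) + p x x * p y y * (s x x - s y y)|
            ≤ |(N:ℝ)*(p x x - p y y)| + |p x x * p y y * (s x x - s y y)| := abs_add_le _ _
          _ = (N:ℝ)*|p x x - p y y| + (p x x * p y y) * |s x x - s y y| := by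
              rw [abs_mul, abs_mul, abs_of_nonneg hN0.le,
                abs_of_nonneg (le_of_lt (mul_pos (by linarith) (by linarith)) : (0:ℝ) ≤ p x x * p y y)]
          _ ≤ (N:ℝ)*|p x x - p y y| + (sup2 K p)^2 * |s x x - s y y| := by
              have h9 : p x x * p y y ≤ (sup2 K p)^2 := by
                rw [sq]; exact mul_le_mul hx2 hy2 (by linarith) (by linarith)
              have := mul_le_mul_of_nonneg_right h9 (abs_nonneg (s x x - s y y))
              linarith
      have t3 : (N:ℝ)*|p x x - p y y| + (sup2 K p)^2 * |s x x - s y y|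
          ≤ (N:ℝ)*(Cp / Real.log (1 / dist x y)) + (sup2 K p)^2*(Cs / Real.log (1 / dist x y)) := by
        have hsq : (0:ℝ) ≤ (sup2 K p)^2 := sq_nonneg _
        have u1 := mul_le_mul_of_nonneg_left hΔP hN0.le
        have u2 := mul_le_mul_of_nonneg_left hΔS hsq
        linarith
      calc _ ≤ (N:ℝ) * ((N:ℝ)*|p x x - p y y| + (sup2 K p)^2 * |s x x - s y y|) :=
            mul_le_mul_of_nonneg_left t1 hN0.le
        _ ≤ _ := mul_le_mul_of_nonneg_left t3 hN0.le
    have hden : ((N:ℝ) - sup2 K p * sup2 K s) * ((N:ℝ) - sup2 K p * sup2 K s)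
        ≤ |((N:ℝ) - p x x * s x x) * ((N:ℝ) - p y y * s y y)| := by
      rw [abs_of_pos (mul_pos hDx0 hDy0)]
      exact mul_le_mul hx5 hy5 hc.le hDx0.le
    calc |(N:ℝ) * ((N:ℝ)*(p x x - p y y) + p x x * p y y * (s x x - s y y))| /
          |((N:ℝ) - p x x * s x x) * ((N:ℝ) - p y y * s y y)|
        ≤ ((N:ℝ) * ((N:ℝ)*(Cp / Real.log (1 / dist x y)) + (sup2 K p)^2*(Cs / Real.log (1 / dist x y))))
          / (((N:ℝ) - sup2 K p * sup2 K s) * ((N:ℝ) - sup2 K p * sup2 K s)) := by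
          apply div_le_div₀ (by positivity) hnum (by positivity) hden
      _ = Cstar / Real.log (1 / dist x y) := by
          rw [hCstardef]
          field_simp
  -- choice of ε0
  set Tc := max 1 (max ((8*Cstar/C0) ^ ((1:ℝ)-β)⁻¹) ((C0/2) ^ β⁻¹)) with hTcdef
  have hTc1 : (1:ℝ) ≤ Tc := le_max_left _ _
  refine ⟨min (1/4) (Real.exp (-Tc)), lt_min (by norm_num) (Real.exp_pos _),
    lt_of_le_of_lt (min_le_left _ _) (by norm_num), ?_⟩
  intro ε hε hεlt n hn hεη
  set A := {x : EucN N | ε ^ (n + 1) < dist x x0 ∧ dist x x0 < ε ^ n} with hAdef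
  have hε14 : ε < 1/4 := lt_of_lt_of_le hεlt (min_le_left _ _)
  have hε1 : ε < 1 := by linarith
  set L := Real.log (1/ε) with hLdef
  have hLTc : Tc < L := by
    have h1 : ε < Real.exp (-Tc) := hεlt.trans_le (min_le_right _ _)
    have h2 := Real.log_lt_log hε h1
    rw [Real.log_exp] at h2
    rw [hLdef, one_div, Real.log_inv]; linarith
  have hL1 : 1 < L := lt_of_le_of_lt hTc1 hLTc
  have hL0 : 0 < L := by linarith
  have hlogε : Real.log ε = -L := by rw [hLdef, one_div, Real.log_inv]; ring
  have hlog2 : Real.log 2 ≤ L/2 := by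
    have h4 : Real.log 4 = 2 * Real.log 2 := by
      rw [show (4:ℝ) = 2^(2:ℕ) by norm_num, Real.log_pow]; push_cast; ring
    have h5 : Real.log 4 ≤ L := by
      have h6 : (4:ℝ) ≤ 1/ε := by rw [le_div_iff₀ hε]; linarith
      calc Real.log 4 ≤ Real.log (1/ε) := Real.log_le_log (by norm_num) h6
        _ = L := rfl
    linarith
  have hnR : (1:ℝ) ≤ (n:ℝ) := by exact_mod_cast hn
  have hεn0 : 0 < ε ^ n := pow_pos hε n
  have hεn1 : ε^(n+1) < ε^n := by
    calc ε^(n+1) = ε^n * ε := pow_succ ε n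
      _ < ε^n * 1 := mul_lt_mul_of_pos_left hε1 hεn0
      _ = ε^n := mul_one _
  have hεnε : ε ^ n ≤ ε := by
    calc ε^n ≤ ε^1 := pow_le_pow_of_le_one hε.le hε1.le hn
      _ = ε := pow_one ε
  have hAK : ∀ x ∈ A, x ∈ K := by
    intro x hx
    exact subset_closure (hball (mem_ball.mpr (lt_trans hx.2 hεη)))
  have hAne : A.Nonempty := by
    obtain ⟨z, hz⟩ := (NormedSpace.sphere_nonempty (x := x0) (r := (ε^(n+1)+ε^n)/2)).mpr
      (le_of_lt (show 0 < (ε^(n+1)+ε^n)/2 by positivity))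
    rw [mem_sphere] at hz
    exact ⟨z, by rw [hAdef]; constructor <;> [rw [hz]; rw [hz]] <;> linarith⟩
  have hn1β : (0:ℝ) < ((n:ℝ)+1) ^ β := Real.rpow_pos_of_pos (by positivity) β
  have hLβ : 0 < L ^ β := Real.rpow_pos_of_pos hL0 β
  set δ := (C0/2) / (((n:ℝ)+1)^β * L^β) with hδdef
  have hδ0 : 0 < δ := by positivity
  -- step 2 : oscillation of pCrit on the annulus
  have hstep2 : ∀ x ∈ A, ∀ y ∈ A, pCrit s p x ≤ pCrit s p y + δ := by
    intro x hx y hy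
    rcases eq_or_lt_of_le (dist_nonneg (x := x) (y := y)) with hd0 | hd0
    · have hxy : x = y := dist_eq_zero.mp hd0.symm
      rw [hxy]; linarith
    have hdub : dist x y < 2 * ε^n := by
      calc dist x y ≤ dist x x0 + dist y x0 := dist_triangle_right x y x0
        _ < 2*ε^n := by have := hx.2; have := hy.2; linarith
    have hd1 : dist x y < 1 := by linarith
    have hdiff := hpcrit_diff x (hAK x hx) y (hAK y hy) hd0 hd1
    have hlogd : (n:ℝ)/2 * L ≤ Real.log (1/dist x y) := by
      have h1 : Real.log (dist x y) ≤ Real.log (2*ε^n) :=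
        Real.log_le_log hd0 hdub.le
      have h2 : Real.log (2*ε^n) = Real.log 2 + (n:ℝ) * Real.log ε := by
        rw [Real.log_mul two_ne_zero (pow_ne_zero _ hε.ne'), Real.log_pow]
      rw [one_div, Real.log_inv]
      rw [h2, hlogε] at h1
      have := mul_nonneg (sub_nonneg.mpr hnR) hL0.le
      linarith [this]
    have hlogd0 : 0 < Real.log (1/dist x y) := lt_of_lt_of_le (by positivity) hlogd
    have hfinal : Cstar / Real.log (1/dist x y) ≤ δ := by
      have step1 : Cstar / Real.log (1/dist x y) ≤ Cstar / ((n:ℝ)/2 * L) :=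
        div_le_div_of_nonneg_left hCstar.le (by positivity) hlogd
      have step2 : Cstar / ((n:ℝ)/2 * L) ≤ δ := by
        rw [hδdef, div_le_div_iff₀ (by positivity) (by positivity)]
        -- Cstar * ((n+1)^β * L^β) ≤ C0/2 * (n/2 * L)
        have e1 : ((n:ℝ)+1)^β ≤ 2*(n:ℝ) := by
          calc ((n:ℝ)+1)^β ≤ ((n:ℝ)+1)^(1:ℝ) :=
                Real.rpow_le_rpow_of_exponent_le (by linarith) hβ1.le
            _ = (n:ℝ)+1 := Real.rpow_one _
            _ ≤ 2*(n:ℝ) := by linarith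
        have hLsplit : L^β * L^((1:ℝ)-β) = L := by
          rw [← Real.rpow_add hL0]; norm_num
        have hT2 : (8*Cstar/C0) ^ ((1:ℝ)-β)⁻¹ ≤ Tc :=
          le_trans (le_max_left _ _) (le_max_right 1 _)
        have hL1β : 8*Cstar ≤ C0 * L^((1:ℝ)-β) := by
          have hb0 : (0:ℝ) ≤ 8*Cstar/C0 := by positivity
          have h7 := Real.rpow_le_rpow (by positivity) (hT2.trans hLTc.le)
            (by linarith : (0:ℝ) ≤ 1-β)
          rw [← Real.rpow_mul hb0, inv_mul_cancel₀ (by linarith : (1:ℝ)-β ≠ 0),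
            Real.rpow_one] at h7
          rw [div_le_iff₀ hC0] at h7
          linarith [h7]
        have hint1 := mul_le_mul_of_nonneg_left hL1β
          (show (0:ℝ) ≤ (n:ℝ)*L^β/4 by positivity)
        have hint2 := mul_le_mul_of_nonneg_right e1 hLβ.le
        have hint3 := mul_le_mul_of_nonneg_left hint2 hCstar.le
        have hXYn : C0/4*(n:ℝ)*(L^β * L^((1:ℝ)-β)) = C0/4*(n:ℝ)*L := by rw [hLsplit]
        linarith [hint1, hint3, hXYn]
      linarith
    have := le_abs_self (pCrit s p x - pCrit s p y)
    linarith
  by_cases hbA : BddAbove (q '' A)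
  · -- step 1 : the sphere-wise estimate
    have hstep1 : ∀ x ∈ A, q x ≤ pCrit s p x - 2*δ := by
      intro x hx
      have hρ0 : 0 < dist x x0 := lt_trans (by positivity) hx.1
      have hsub : sphere x0 (dist x x0) ⊆ A := by
        intro z hz
        rw [mem_sphere] at hz
        rw [hAdef]
        exact ⟨hz ▸ hx.1, hz ▸ hx.2⟩
      have h1 : q x ≤ sSup (q '' sphere x0 (dist x x0)) :=
        le_csSup (hbA.mono (Set.image_mono (f := q) hsub))
          (Set.mem_image_of_mem q (mem_sphere.mpr rfl))
      have h2 := hrate (dist x x0) hρ0 (lt_trans hx.2 hεη)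
      have h3 : sInf (pCrit s p '' sphere x0 (dist x x0)) ≤ pCrit s p x := by
        apply csInf_le
        · refine ⟨1, ?_⟩
          rintro b ⟨z, hz, rfl⟩
          have hzK := hAK z (hsub hz)
          linarith [hPcrit_ge z hzK, hp1]
        · exact Set.mem_image_of_mem _ (mem_sphere.mpr rfl)
      have hρ1 : dist x x0 < 1 := by
        have := hx.2; linarith
      have hlogρ : 0 < -Real.log (dist x x0) := by
        have := Real.log_neg hρ0 hρ1; linarith
      have hub : -Real.log (dist x x0) ≤ ((n:ℝ)+1) * L := by
        have h5 : Real.log (ε^(n+1)) ≤ Real.log (dist x x0) :=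
          Real.log_le_log (pow_pos hε _) hx.1.le
        rw [Real.log_pow, hlogε] at h5
        push_cast at h5
        linarith [h5]
      have hpow : (-Real.log (dist x x0)) ^ β ≤ ((n:ℝ)+1)^β * L^β := by
        calc (-Real.log (dist x x0))^β ≤ (((n:ℝ)+1)*L)^β :=
              Real.rpow_le_rpow hlogρ.le hub hβ0.le
          _ = ((n:ℝ)+1)^β * L^β := Real.mul_rpow (by positivity) hL0.le
      have h4 : 2*δ ≤ C0 / (-Real.log (dist x x0)) ^ β := by
        have h8 : C0 / (((n:ℝ)+1)^β * L^β) ≤ C0 / (-Real.log (dist x x0)) ^ β :=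
          div_le_div_of_nonneg_left hC0.le (Real.rpow_pos_of_pos hlogρ β) hpow
        have h9 : 2*δ = C0 / (((n:ℝ)+1)^β * L^β) := by rw [hδdef]; ring
        linarith
      linarith
    have hmain : ∀ x ∈ A, ∀ y ∈ A, q x ≤ pCrit s p y - δ := by
      intro x hx y hy
      have := hstep1 x hx
      have := hstep2 x hx y hy
      linarith
    apply csSup_le (hAne.image q)
    rintro b ⟨x, hx, rfl⟩
    have hq : q x + δ ≤ sInf (pCrit s p '' A) := by
      apply le_csInf (hAne.image _)
      rintro b ⟨y, hy, rfl⟩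
      linarith [hmain x hx y hy]
    linarith
  · rw [Real.sSup_of_not_bddAbove hbA]
    have hδ1 : δ ≤ 1 := by
      have ha : (1:ℝ) ≤ ((n:ℝ)+1)^β := by
        calc (1:ℝ) = (1:ℝ)^β := (Real.one_rpow β).symm
          _ ≤ ((n:ℝ)+1)^β := Real.rpow_le_rpow (by norm_num) (by linarith) hβ0.le
      have hT3 : (C0/2) ^ β⁻¹ ≤ Tc := le_trans (le_max_right _ _) (le_max_right 1 _)
      have hb : C0/2 ≤ L^β := by
        have h7 := Real.rpow_le_rpow (by positivity) (hT3.trans hLTc.le) hβ0.le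
        rwa [← Real.rpow_mul (by positivity), inv_mul_cancel₀ hβ0.ne', Real.rpow_one] at h7
      rw [hδdef, div_le_one (by positivity)]
      have u3 := mul_le_mul_of_nonneg_right ha hLβ.le
      linarith
    have hinf : δ ≤ sInf (pCrit s p '' A) := by
      apply le_csInf (hAne.image _)
      rintro b ⟨y, hy, rfl⟩
      have h1 := hPcrit_ge y (hAK y hy)
      linarith [hp1]
    linarith
end
end

section
/- Let Ω ⊂ ℝ^N be a bounded Lipschitz domain, let s, p : Ω̄×Ω̄ → ℝ be symmetric log-Hölder continuous with 0 < s^- ≤ s^+ < 1 < p^- ≤ p^+ < N/s^+, and let q : Ω̄ → ℝ be continuous with p^+ ≤ q^- and q(x) ≤ p_s^*(x) for all x ∈ Ω. Assume the continuous embedding W^{s(x,y),p(x,y)}(Ω) ↪ L^{p_s^*(x)}(Ω) holds, and that there exist x_0 ∈ Ω, β ∈ (0,1), C_0 > 0 and η > 0 such that for every ρ ∈ (0,η): max_{x∈∂B_ρ(x_0)} q(x) ≤ min_{x∈∂B_ρ(x_0)} p_s^*(x) − C_0/(−log ρ)^β. Then for every ρ₀ > 0: lim_{ε→0⁺} sup{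 ∫_{B_ε(x_0)∩Ω} |v(x)|^{q(x)} dx : v ∈ W^{s(x,y),p(x,y)}(Ω), ‖v‖_{s,p;Ω} ≤ ρ₀ } = 0. -/
open MeasureTheory Filter Set Metric Topology
open scoped ENNReal NNReal

noncomputable section

variable {N : ℕ}

lemma stmt12Aux_vol_ball_eq {N : ℕ} (hN : 0 < N) (x0 : EucN N) {r : ℝ} (hr : 0 ≤ r) :
    volume (ball x0 r) = ENNReal.ofReal (r ^ N) * volume (ball (0 : EucN N) 1) := by
  haveI : Nonempty (Fin N) := ⟨⟨0, hN⟩⟩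
  haveI : Nontrivial (EucN N) := inferInstance
  rw [Measure.addHaar_ball _ x0 hr, finrank_euclideanSpace_fin]

lemma stmt12Aux_vol_ball_tendsto {N : ℕ} (hN : 0 < N) (x0 : EucN N) :
    Tendsto (fun t : ℝ => volume (ball x0 t)) (𝓝[>] 0) (𝓝 0) := by
  have h1 : Tendsto (fun t : ℝ => ENNReal.ofReal (t ^ N) * volume (ball (0 : EucN N) 1))
      (𝓝[>] (0:ℝ)) (𝓝 0) := by
    have h3 : Tendsto (fun t : ℝ => t ^ N) (𝓝[>] (0:ℝ)) (𝓝 0) := by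
      have h4 : Tendsto (fun t : ℝ => t ^ N) (𝓝 (0:ℝ)) (𝓝 ((0:ℝ) ^ N)) :=
        (continuous_pow N).tendsto (0:ℝ)
      rw [zero_pow hN.ne'] at h4
      exact h4.mono_left nhdsWithin_le_nhds
    have h2 : Tendsto (fun t : ℝ => ENNReal.ofReal (t ^ N)) (𝓝[>] (0:ℝ)) (𝓝 0) := by
      simpa [Function.comp_def] using (ENNReal.continuous_ofReal.tendsto 0).comp h3
    have := ENNReal.Tendsto.mul_const h2
      (Or.inr (measure_ball_lt_top (μ := (volume : Measure (EucN N))) (x := (0:EucN N))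
        (r := 1)).ne)
    simpa using this
  refine h1.congr' ?_
  filter_upwards [self_mem_nhdsWithin] with t ht
  exact (stmt12Aux_vol_ball_eq hN x0 (le_of_lt ht)).symm

lemma stmt12Aux_vol_singleton {N : ℕ} (hN : 0 < N) (x0 : EucN N) :
    volume ({x0} : Set (EucN N)) = 0 := by
  have h := stmt12Aux_vol_ball_tendsto hN x0
  have hle : ∀ᶠ t in 𝓝[>] (0:ℝ), volume ({x0} : Set (EucN N)) ≤ volume (ball x0 t) := by
    filter_upwards [self_mem_nhdsWithin] with t ht
    exact measure_mono (singleton_subset_iff.mpr (mem_ball_self ht))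
  simpa using ge_of_tendsto h hle

lemma stmt12Aux_annuli_bound {N : ℕ} (hN : 0 < N) (x0 : EucN N) (P γ : ℝ) (hP : 0 < P)
    (hγ0 : 0 < γ) (hγ1 : γ < 1) :
    ∃ C2 : ℝ≥0∞, C2 ≠ ⊤ ∧ ∃ ε₁ : ℝ, 0 < ε₁ ∧ ε₁ < 1 ∧ ∀ ε : ℝ, 0 < ε → ε ≤ ε₁ →
      (∫⁻ x in ball x0 ε, ENNReal.ofReal (Real.exp (P * (-Real.log (dist x x0)) ^ γ)))
        ≤ C2 * ENNReal.ofReal (ε ^ ((N : ℝ) / 2)) := by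
  classical
  have hN' : (0:ℝ) < N := by exact_mod_cast hN
  set c : ℝ := (N : ℝ) / 2 with hc
  have hc0 : 0 < c := by positivity
  set Lc : ℝ := max 1 ((2 * P / N) ^ (1 / (1 - γ))) with hLcdef
  have hLc1 : (1:ℝ) ≤ Lc := le_max_left _ _
  have hLc0 : (0:ℝ) < Lc := lt_of_lt_of_le one_pos hLc1
  have h1γ : (0:ℝ) < 1 - γ := by linarith
  have hkey : ∀ M : ℝ, Lc ≤ M → P * M ^ γ ≤ c * M := by
    intro M hM
    have hM0 : (0:ℝ) < M := lt_of_lt_of_le hLc0 hM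
    have e1 : M ^ (γ - 1) * M = M ^ γ := by
      calc M ^ (γ-1) * M = M ^ (γ-1) * M ^ (1:ℝ) := by rw [Real.rpow_one]
        _ = M ^ ((γ-1)+1) := (Real.rpow_add hM0 _ _).symm
        _ = M ^ γ := by ring_nf
    have h2 : M ^ (γ - 1) ≤ Lc ^ (γ - 1) :=
      Real.rpow_le_rpow_of_nonpos hLc0 hM (by linarith)
    have hbase : (0:ℝ) ≤ 2 * P / N := by positivity
    have h5 : ((2 * P / (N:ℝ)) ^ (1 / (1 - γ))) ^ (1 - γ) = (2 * P / (N:ℝ)) := by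
      rw [← Real.rpow_mul hbase, one_div, inv_mul_cancel₀ h1γ.ne', Real.rpow_one]
    have h4 : (2 * P / (N:ℝ)) ≤ Lc ^ (1 - γ) := by
      rw [← h5]
      exact Real.rpow_le_rpow (Real.rpow_nonneg hbase _) (le_max_right _ _) h1γ.le
    have h6 : P / c ≤ Lc ^ (1 - γ) := by
      have : 2 * P / (N:ℝ) = P / c := by rw [hc]; field_simp
      linarith
    have h7 : Lc ^ (γ - 1) ≤ c / P := by
      have e2 : Lc ^ (γ - 1) = (Lc ^ (1 - γ))⁻¹ := by
        rw [show γ - 1 = -(1-γ) by ring, Real.rpow_neg hLc0.le]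
      rw [e2]
      have hPc : 0 < P / c := by positivity
      calc (Lc ^ (1-γ))⁻¹ ≤ (P / c)⁻¹ := by
            apply inv_anti₀ hPc h6
        _ = c / P := by rw [inv_div]
    have h8 : M ^ (γ - 1) ≤ c / P := h2.trans h7
    have := mul_le_mul_of_nonneg_right (mul_le_mul_of_nonneg_left h8 hP.le) hM0.le
    calc P * M ^ γ = P * M ^ (γ-1) * M := by rw [← e1]; ring
      _ ≤ P * (c / P) * M := this
      _ = c * M := by field_simp
  set cB := volume (ball (0 : EucN N) 1) with hcBdef
  have hcB : cB ≠ ⊤ :=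
    (measure_ball_lt_top (μ := (volume : Measure (EucN N))) (x := (0:EucN N)) (r := 1)).ne
  have hq1 : ENNReal.ofReal ((2⁻¹:ℝ) ^ c) < 1 := by
    rw [ENNReal.ofReal_lt_one]
    exact Real.rpow_lt_one (by norm_num) (by norm_num) hc0
  set C2 : ℝ≥0∞ := ENNReal.ofReal ((2:ℝ) ^ c) * cB * (1 - ENNReal.ofReal ((2⁻¹:ℝ) ^ c))⁻¹
    with hC2def
  have hC2top : C2 ≠ ⊤ := by
    apply ENNReal.mul_ne_top (ENNReal.mul_ne_top ENNReal.ofReal_ne_top hcB)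
    rw [ENNReal.inv_ne_top]
    exact (tsub_pos_iff_lt.mpr hq1).ne'
  refine ⟨C2, hC2top, Real.exp (-Lc), Real.exp_pos _, ?_, ?_⟩
  · calc Real.exp (-Lc) < Real.exp 0 := Real.exp_lt_exp.mpr (by linarith)
      _ = 1 := Real.exp_zero
  intro ε hε0 hε1
  have hLε : Lc ≤ -Real.log ε := by
    have h := Real.log_le_log hε0 hε1
    rw [Real.log_exp] at h
    linarith
  set r : ℕ → ℝ := fun j => ε * (2⁻¹:ℝ) ^ j with hrdef
  have hrpos : ∀ j, 0 < r j := fun j => mul_pos hε0 (pow_pos (by norm_num) j)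
  have hrle : ∀ j, r j ≤ ε := by
    intro j
    calc r j ≤ ε * 1 := by
          apply mul_le_mul_of_nonneg_left _ hε0.le
          exact pow_le_one₀ (by norm_num) (by norm_num)
      _ = ε := mul_one ε
  have hrlt1 : ∀ j, r j < 1 := fun j =>
    lt_of_le_of_lt (hrle j) (lt_of_le_of_lt hε1 (by
      calc Real.exp (-Lc) < Real.exp 0 := Real.exp_lt_exp.mpr (by linarith)
        _ = 1 := Real.exp_zero))
  set A : ℕ → Set (EucN N) := fun j => ball x0 (r j) \ ball x0 (r (j+1)) with hAdef
  have hAmeas : ∀ j, MeasurableSet (A j) := fun j =>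
    measurableSet_ball.diff measurableSet_ball
  set f : EucN N → ℝ≥0∞ := fun x => ENNReal.ofReal (Real.exp (P * (-Real.log (dist x x0)) ^ γ))
    with hfdef
  have hcover : ball x0 ε \ {x0} ⊆ ⋃ j, A j := by
    intro x hx
    have hxε : dist x x0 < ε := mem_ball.mp hx.1
    have hx0 : 0 < dist x x0 := dist_pos.mpr (by simpa using hx.2)
    set ρ := dist x x0 with hρ
    have hρε : 0 < ρ / ε := div_pos hx0 hε0
    obtain ⟨n, hn⟩ := exists_pow_lt_of_lt_one hρε (by norm_num : (2⁻¹:ℝ) < 1)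
    have hPred : ∃ j : ℕ, ε * (2⁻¹:ℝ) ^ (j+1) ≤ ρ := by
      refine ⟨n, ?_⟩
      have h1 : (2⁻¹:ℝ) ^ (n+1) ≤ (2⁻¹:ℝ) ^ n := by
        rw [pow_succ]
        nlinarith [pow_pos (show (0:ℝ) < 2⁻¹ by norm_num) n]
      have h2 : ε * (2⁻¹:ℝ) ^ (n+1) ≤ ε * (2⁻¹:ℝ) ^ n :=
        mul_le_mul_of_nonneg_left h1 hε0.le
      have h3 : ε * (2⁻¹:ℝ) ^ n < ε * (ρ / ε) := mul_lt_mul_of_pos_left hn hε0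
      have h4 : ε * (ρ / ε) = ρ := by field_simp
      linarith
    set j0 := Nat.find hPred with hj0def
    have hspec : ε * (2⁻¹:ℝ) ^ (j0+1) ≤ ρ := Nat.find_spec hPred
    refine mem_iUnion.mpr ⟨j0, ?_, ?_⟩
    · rw [mem_ball]
      rcases Nat.eq_zero_or_pos j0 with h0 | h0
      · rw [h0]; simpa [hrdef] using hxε
      · obtain ⟨k, hk⟩ := Nat.exists_eq_succ_of_ne_zero (Nat.pos_iff_ne_zero.mp h0)
        have hmin := Nat.find_min hPred (show k < j0 by omega)
        push_neg at hmin
        rw [show j0 = k+1 from hk]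
        exact hmin
    · rw [mem_ball]
      push_neg
      exact hspec
  have hsplit : (∫⁻ x in ball x0 ε, f x) ≤ ∑' j, ∫⁻ x in A j, f x := by
    have h0 : ball x0 ε = (ball x0 ε \ {x0}) ∪ {x0} :=
      (diff_union_of_subset (singleton_subset_iff.mpr (mem_ball_self hε0))).symm
    calc ∫⁻ x in ball x0 ε, f x = ∫⁻ x in (ball x0 ε \ {x0}) ∪ {x0}, f x := by rw [← h0]
      _ ≤ (∫⁻ x in ball x0 ε \ {x0}, f x) + ∫⁻ x in {x0}, f x := lintegral_union_le _ _ _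
      _ = (∫⁻ x in ball x0 ε \ {x0}, f x) + 0 := by
          rw [Measure.restrict_eq_zero.mpr (stmt12Aux_vol_singleton hN x0),
            lintegral_zero_measure]
      _ = ∫⁻ x in ball x0 ε \ {x0}, f x := by rw [add_zero]
      _ ≤ ∫⁻ x in ⋃ j, A j, f x := lintegral_mono_set hcover
      _ ≤ ∑' j, ∫⁻ x in A j, f x := lintegral_iUnion_le _ _
  have hann : ∀ j, (∫⁻ x in A j, f x) ≤
      ENNReal.ofReal (r (j+1) ^ (-c)) * (ENNReal.ofReal (r j ^ N) * cB) := by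
    intro j
    have hbound : ∀ x ∈ A j, Real.exp (P * (-Real.log (dist x x0)) ^ γ) ≤ r (j+1) ^ (-c) := by
      intro x hx
      have h1 : r (j+1) ≤ dist x x0 := by
        by_contra h
        exact hx.2 (mem_ball.mpr (not_le.mp h))
      have h2 : dist x x0 < r j := mem_ball.mp hx.1
      have hd0 : 0 < dist x x0 := lt_of_lt_of_le (hrpos _) h1
      have hL0 : 0 ≤ -Real.log (dist x x0) := by
        have := Real.log_neg hd0 (lt_trans h2 (hrlt1 j))
        linarith
      have hL_le : -Real.log (dist x x0) ≤ -Real.log (r (j+1)) := by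
        have := Real.log_le_log (hrpos (j+1)) h1
        linarith
      have hM_Lc : Lc ≤ -Real.log (r (j+1)) := by
        have h7 := Real.log_le_log (hrpos (j+1)) (hrle (j+1))
        linarith
      calc Real.exp (P * (-Real.log (dist x x0)) ^ γ)
          ≤ Real.exp (P * (-Real.log (r (j+1))) ^ γ) := by
            apply Real.exp_le_exp.mpr
            exact mul_le_mul_of_nonneg_left (Real.rpow_le_rpow hL0 hL_le hγ0.le) hP.le
        _ ≤ Real.exp (c * (-Real.log (r (j+1)))) := Real.exp_le_exp.mpr (hkey _ hM_Lc)
        _ = r (j+1) ^ (-c) := by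
            rw [Real.rpow_def_of_pos (hrpos (j+1))]
            congr 1
            ring
    calc (∫⁻ x in A j, f x) ≤ ∫⁻ _ in A j, ENNReal.ofReal (r (j+1) ^ (-c)) := by
          apply lintegral_mono_ae
          rw [ae_restrict_iff' (hAmeas j)]
          filter_upwards with x hx
          exact ENNReal.ofReal_le_ofReal (hbound x hx)
      _ = ENNReal.ofReal (r (j+1) ^ (-c)) * volume (A j) := setLIntegral_const _ _
      _ ≤ ENNReal.ofReal (r (j+1) ^ (-c)) * (ENNReal.ofReal (r j ^ N) * cB) := by
          apply mul_le_mul_right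
          rw [← stmt12Aux_vol_ball_eq hN x0 (hrpos j).le]
          exact measure_mono diff_subset
  have hprod : ∀ j : ℕ, r (j+1) ^ (-c) * r j ^ N = (2:ℝ) ^ c * ε ^ c * ((2⁻¹:ℝ) ^ c) ^ j := by
    intro j
    have hz0 : 0 < r j := hrpos j
    have e0 : r (j+1) = r j / 2 := by
      rw [hrdef]; simp only; rw [pow_succ]; ring
    have e1 : (r j / 2) ^ (-c) = r j ^ (-c) * 2 ^ c := by
      rw [Real.div_rpow hz0.le (by norm_num : (0:ℝ) ≤ 2), Real.rpow_neg (by norm_num : (0:ℝ) ≤ 2)]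
      rw [div_eq_mul_inv, inv_inv]
    have e2 : r j ^ (N:ℕ) = r j ^ ((N:ℝ)) := (Real.rpow_natCast (r j) N).symm
    have e3 : r j ^ (-c) * r j ^ ((N:ℝ)) = r j ^ c := by
      rw [← Real.rpow_add hz0]
      congr 1
      rw [hc]; ring
    have e4 : r j ^ c = ε ^ c * ((2⁻¹:ℝ) ^ c) ^ j := by
      rw [hrdef]
      simp only
      rw [Real.mul_rpow hε0.le (pow_nonneg (by norm_num) j)]
      congr 1
      rw [← Real.rpow_natCast (2⁻¹:ℝ) j, ← Real.rpow_mul (by norm_num : (0:ℝ) ≤ 2⁻¹),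
        mul_comm (j:ℝ) c, Real.rpow_mul (by norm_num : (0:ℝ) ≤ 2⁻¹), Real.rpow_natCast]
    calc r (j+1) ^ (-c) * r j ^ N = (r j / 2) ^ (-c) * r j ^ ((N:ℝ)) := by rw [e0, e2]
      _ = r j ^ (-c) * 2 ^ c * r j ^ ((N:ℝ)) := by rw [e1]
      _ = 2 ^ c * (r j ^ (-c) * r j ^ ((N:ℝ))) := by ring
      _ = 2 ^ c * (r j ^ c) := by rw [e3]
      _ = 2 ^ c * (ε ^ c * ((2⁻¹:ℝ) ^ c) ^ j) := by rw [e4]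
      _ = (2:ℝ) ^ c * ε ^ c * ((2⁻¹:ℝ) ^ c) ^ j := by ring
  have hsum : (∑' j, ∫⁻ x in A j, f x) ≤ C2 * ENNReal.ofReal (ε ^ c) := by
    calc (∑' j, ∫⁻ x in A j, f x)
        ≤ ∑' j : ℕ, ENNReal.ofReal (r (j+1) ^ (-c)) * (ENNReal.ofReal (r j ^ N) * cB) :=
          ENNReal.tsum_le_tsum hann
      _ = ∑' j : ℕ, (ENNReal.ofReal ((2:ℝ) ^ c * ε ^ c) * cB) *
            ENNReal.ofReal ((2⁻¹:ℝ) ^ c) ^ j := by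
          apply tsum_congr
          intro j
          rw [← mul_assoc, ← ENNReal.ofReal_mul (Real.rpow_nonneg (hrpos (j+1)).le _), hprod j,
            ENNReal.ofReal_mul (by positivity), ← ENNReal.ofReal_pow (by positivity)]
          ring
      _ = (ENNReal.ofReal ((2:ℝ) ^ c * ε ^ c) * cB) *
            ∑' j : ℕ, ENNReal.ofReal ((2⁻¹:ℝ) ^ c) ^ j := ENNReal.tsum_mul_left
      _ = (ENNReal.ofReal ((2:ℝ) ^ c * ε ^ c) * cB) *
            (1 - ENNReal.ofReal ((2⁻¹:ℝ) ^ c))⁻¹ := by rw [ENNReal.tsum_geometric]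
      _ = C2 * ENNReal.ofReal (ε ^ c) := by
          rw [hC2def, ENNReal.ofReal_mul (by positivity)]
          ring
  exact hsplit.trans hsum

lemma stmt12Aux_rpow_split {w a d T P : ℝ} (hw : 0 ≤ w) (hT : 1 ≤ T) (ha : 0 ≤ a)
    (hd : 0 ≤ d) (hP : a + d ≤ P) : w ^ a ≤ T ^ P + w ^ (a + d) * T ^ (-d) := by
  have hT0 : (0:ℝ) < T := lt_of_lt_of_le one_pos hT
  rcases le_total w T with h | h
  · have h1 : w ^ a ≤ T ^ a := Real.rpow_le_rpow hw h ha
    have h2 : T ^ a ≤ T ^ P := Real.rpow_le_rpow_of_exponent_le hT (by linarith)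
    have h3 : 0 ≤ w ^ (a + d) * T ^ (-d) :=
      mul_nonneg (Real.rpow_nonneg hw _) (Real.rpow_nonneg hT0.le _)
    linarith
  · have hw0 : 0 < w := lt_of_lt_of_le hT0 h
    have h1 : w ^ a = w ^ (a + d) * w ^ (-d) := by
      rw [← Real.rpow_add hw0]; ring_nf
    have h2 : w ^ (-d) ≤ T ^ (-d) := Real.rpow_le_rpow_of_nonpos hT0 h (by linarith)
    have h4 : 0 ≤ T ^ P := Real.rpow_nonneg hT0.le _
    have h5 : 0 ≤ w ^ (a+d) := Real.rpow_nonneg hw _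
    calc w ^ a = w ^ (a+d) * w ^ (-d) := h1
      _ ≤ w ^ (a+d) * T ^ (-d) := mul_le_mul_of_nonneg_left h2 h5
      _ ≤ T ^ P + w ^ (a+d) * T ^ (-d) := le_add_of_nonneg_left h4

set_option maxHeartbeats 1000000

/-- uniform vanishing of `∫_{B_ε(x₀)∩Ω} |v|^{q(x)}` over bounded sets of
`W^{s(x,y),p(x,y)}(Ω)` as `ε → 0⁺`. -/
theorem stmt12 {N : ℕ} (Ω : Set (EucN N)) (hΩ : IsLipschitzDomain Ω)
    (s p : EucN N → EucN N → ℝ) (hssymm : SymmFun s) (hpsymm : SymmFun p)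
    (hslog : LogHolderOn (fun z : EucN N × EucN N => s z.1 z.2) ((closure Ω) ×ˢ (closure Ω)))
    (hplog : LogHolderOn (fun z : EucN N × EucN N => p z.1 z.2) ((closure Ω) ×ˢ (closure Ω)))
    (hs0 : 0 < inf2 (closure Ω) s) (hs2 : inf2 (closure Ω) s ≤ sup2 (closure Ω) s)
    (hs1 : sup2 (closure Ω) s < 1)
    (hp1 : 1 < inf2 (closure Ω) p) (hp2 : inf2 (closure Ω) p ≤ sup2 (closure Ω) p)
    (hpN : sup2 (closure Ω) p < (N : ℝ) / sup2 (closure Ω) s)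
    (q : EucN N → ℝ) (hqc : ContinuousOn q (closure Ω))
    (hq1 : sup2 (closure Ω) p ≤ inf1 (closure Ω) q)
    (hq2 : ∀ x ∈ Ω, q x ≤ pCrit s p x)
    (hemb : ∃ C > 0, ∀ u : EucN N → ℝ, MemW Ω s p u →
      luxNorm Ω (pCrit s p) u ≤ ENNReal.ofReal C * sobNorm Ω s p u)
    (x0 : EucN N) (hx0 : x0 ∈ Ω) (β C0 η : ℝ)
    (hβ0 : 0 < β) (hβ1 : β < 1) (hC0 : 0 < C0) (hη : 0 < η)
    (hrate : ∀ ρ : ℝ, 0 < ρ → ρ < η →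
      sSup (q '' sphere x0 ρ) ≤ sInf (pCrit s p '' sphere x0 ρ) - C0 / (-Real.log ρ) ^ β) :
    ∀ ρ0 : ℝ, 0 < ρ0 →
      Tendsto (fun ε : ℝ =>
          sSup {t : ℝ≥0∞ | ∃ v : EucN N → ℝ, MemW Ω s p v ∧
            sobNorm Ω s p v ≤ ENNReal.ofReal ρ0 ∧
            t = ∫⁻ x in ball x0 ε ∩ Ω, ENNReal.ofReal (|v x| ^ q x)})
        (𝓝[>] 0) (𝓝 0) := by

  intro ρ0 hρ0
  rcases Nat.eq_zero_or_pos N with hN0 | hN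
  · exfalso
    subst hN0
    set ρ := min (η/2) (2⁻¹ : ℝ) with hρdef
    have hρpos : 0 < ρ := lt_min (by linarith) (by norm_num)
    have hρη : ρ < η := lt_of_le_of_lt (min_le_left _ _) (by linarith)
    have hρhalf : ρ ≤ 2⁻¹ := min_le_right _ _
    have hsph : (sphere x0 ρ) = (∅ : Set (EucN 0)) := by
      ext x
      simp only [mem_sphere, mem_empty_iff_false, iff_false]
      rw [Subsingleton.elim x x0, dist_self]
      exact hρpos.ne
    have hr := hrate ρ hρpos hρη
    rw [hsph, image_empty, image_empty, Real.sSup_empty, Real.sInf_empty] at hr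
    have hlog : 0 < -Real.log ρ := by
      have := Real.log_neg hρpos (lt_of_le_of_lt hρhalf (by norm_num))
      linarith
    have hpos : 0 < C0 / (-Real.log ρ) ^ β :=
      div_pos hC0 (Real.rpow_pos_of_pos hlog β)
    linarith
  obtain ⟨hopen, hconn, hbdd, -⟩ := hΩ
  have hΩne : Ω.Nonempty := hconn.nonempty
  have hsubcl : Ω ⊆ closure Ω := subset_closure
  have hclK : IsCompact (closure Ω) :=
    Metric.isCompact_of_isClosed_isBounded isClosed_closure hbdd.closure
  have hpBB : BddBelow (Set.image2 p (closure Ω) (closure Ω)) := by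
    by_contra h
    have h2 := Real.sInf_of_not_bddBelow h
    simp only [inf2] at hp1
    rw [h2] at hp1
    linarith
  have hsp1 : (1:ℝ) < sup2 (closure Ω) p := lt_of_lt_of_le hp1 hp2
  have hpBA : BddAbove (Set.image2 p (closure Ω) (closure Ω)) := by
    by_contra h
    have h2 := Real.sSup_of_not_bddAbove h
    simp only [sup2] at hsp1
    rw [h2] at hsp1
    linarith
  have hp_lb : ∀ x ∈ closure Ω, ∀ y ∈ closure Ω, 1 < p x y := fun x hx y hy =>
    lt_of_lt_of_le hp1 (csInf_le hpBB (Set.mem_image2_of_mem hx hy))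
  have hp_ub : ∀ x ∈ closure Ω, ∀ y ∈ closure Ω, p x y ≤ sup2 (closure Ω) p :=
    fun x hx y hy => le_csSup hpBA (Set.mem_image2_of_mem hx hy)
  have hsBB : BddBelow (Set.image2 s (closure Ω) (closure Ω)) := by
    by_contra h
    have h2 := Real.sInf_of_not_bddBelow h
    simp only [inf2] at hs0
    rw [h2] at hs0
    linarith
  have hss0 : (0:ℝ) < sup2 (closure Ω) s := lt_of_lt_of_le hs0 hs2
  have hsBA : BddAbove (Set.image2 s (closure Ω) (closure Ω)) := by
    by_contra h
    have h2 := Real.sSup_of_not_bddAbove h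
    simp only [sup2] at hss0
    rw [h2] at hss0
    linarith
  have hs_lb : ∀ x ∈ closure Ω, ∀ y ∈ closure Ω, 0 < s x y := fun x hx y hy =>
    lt_of_lt_of_le hs0 (csInf_le hsBB (Set.mem_image2_of_mem hx hy))
  have hs_ub : ∀ x ∈ closure Ω, ∀ y ∈ closure Ω, s x y ≤ sup2 (closure Ω) s :=
    fun x hx y hy => le_csSup hsBA (Set.mem_image2_of_mem hx hy)
  have hNr : (0:ℝ) < N := by exact_mod_cast hN
  have hDpos : 0 < (N:ℝ) - sup2 (closure Ω) p * sup2 (closure Ω) s := by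
    have := (lt_div_iff₀ hss0).mp hpN
    linarith
  set P : ℝ := (N:ℝ) * sup2 (closure Ω) p / ((N:ℝ) - sup2 (closure Ω) p * sup2 (closure Ω) s)
    with hPdef
  have hP0 : 0 < P := div_pos (mul_pos hNr (lt_trans one_pos hsp1)) hDpos
  have hpc_bounds : ∀ x ∈ closure Ω, 0 ≤ pCrit s p x ∧ pCrit s p x ≤ P := by
    intro x hx
    have h1 : 1 < p x x := hp_lb x hx x hx
    have h2 : 0 < s x x := hs_lb x hx x hx
    have h3 : p x x * s x x ≤ sup2 (closure Ω) p * sup2 (closure Ω) s :=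
      mul_le_mul (hp_ub x hx x hx) (hs_ub x hx x hx) h2.le (by linarith)
    have hden : 0 < (N:ℝ) - p x x * s x x := by linarith
    constructor
    · exact div_nonneg (mul_nonneg hNr.le (by linarith)) hden.le
    · simp only [pCrit]
      rw [hPdef]
      apply div_le_div₀ (mul_pos hNr (lt_trans one_pos hsp1)).le
        (mul_le_mul_of_nonneg_left (hp_ub x hx x hx) hNr.le) hDpos (by linarith)
  have hq_lb : ∀ x ∈ closure Ω, 1 < q x := by
    intro x hx
    have h1 : inf1 (closure Ω) q ≤ q x :=
      csInf_le (hclK.bddBelow_image hqc) (Set.mem_image_of_mem q hx)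
    simp only [inf1] at h1
    simp only [inf1] at hq1
    linarith
  set Q : ℝ := sup1 (closure Ω) q with hQdef
  have hq_ub : ∀ x ∈ closure Ω, q x ≤ Q := fun x hx =>
    le_csSup (hclK.bddAbove_image hqc) (Set.mem_image_of_mem q hx)
  obtain ⟨rΩ, hrΩ0, hrΩ⟩ := Metric.isOpen_iff.mp hopen x0 hx0
  set γ : ℝ := (1 + β) / 2 with hγdef
  have hγβ : β < γ := by rw [hγdef]; linarith
  have hγ0 : 0 < γ := by rw [hγdef]; linarith
  have hγ1 : γ < 1 := by rw [hγdef]; linarith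
  obtain ⟨C2, hC2top, ε₁, hε₁0, hε₁1, hJ⟩ := stmt12Aux_annuli_bound hN x0 P γ hP0 hγ0 hγ1
  obtain ⟨C, hC, hCemb⟩ := hemb
  set lam : ℝ := C * ρ0 + 1 with hlamdef
  have hlam1 : 1 ≤ lam := by
    have h9 : 0 < C * ρ0 := mul_pos hC hρ0
    rw [hlamdef]
    linarith
  have hlam0 : 0 < lam := by linarith
  set Λ : ℝ := lam ^ Q with hΛdef
  have hΛ0 : 0 ≤ Λ := Real.rpow_nonneg (by linarith) _
  set ε₂ : ℝ := min (min η rΩ) (min ε₁ 2⁻¹) with hε₂def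
  have hε₂0 : 0 < ε₂ := lt_min (lt_min hη hrΩ0) (lt_min hε₁0 (by norm_num))
  set B : ℝ → ℝ≥0∞ := fun ε =>
    ENNReal.ofReal Λ * volume (ball x0 ε) +
      ENNReal.ofReal Λ * (C2 * ENNReal.ofReal (ε ^ ((N:ℝ)/2))) +
      ENNReal.ofReal Λ * ENNReal.ofReal (Real.exp (-(C0 * (-Real.log ε) ^ (γ - β))))
    with hBdef
  have hBtendsto : Tendsto B (𝓝[>] (0:ℝ)) (𝓝 0) := by
    have hT1 : Tendsto (fun ε : ℝ => ENNReal.ofReal Λ * volume (ball x0 ε))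
        (𝓝[>] (0:ℝ)) (𝓝 0) := by
      have h9 := ENNReal.Tendsto.const_mul (a := ENNReal.ofReal Λ)
        (stmt12Aux_vol_ball_tendsto hN x0) (Or.inr ENNReal.ofReal_ne_top)
      rw [mul_zero] at h9
      exact h9
    have hT2 : Tendsto (fun ε : ℝ => ENNReal.ofReal Λ * (C2 * ENNReal.ofReal (ε ^ ((N:ℝ)/2))))
        (𝓝[>] (0:ℝ)) (𝓝 0) := by
      have h1 : Tendsto (fun x : ℝ => x ^ ((N:ℝ)/2)) (𝓝[>] (0:ℝ)) (𝓝 0) := by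
        have h2 : ContinuousAt (fun x : ℝ => x ^ ((N:ℝ)/2)) 0 :=
          Real.continuousAt_rpow_const 0 _ (Or.inr (by positivity))
        have h3 := h2.tendsto.mono_left (nhdsWithin_le_nhds (s := Set.Ioi (0:ℝ)))
        rwa [Real.zero_rpow (by positivity : ((N:ℝ)/2) ≠ 0)] at h3
      have h2 : Tendsto (fun ε : ℝ => ENNReal.ofReal (ε ^ ((N:ℝ)/2))) (𝓝[>] (0:ℝ)) (𝓝 0) := by
        simpa [Function.comp_def] using (ENNReal.continuous_ofReal.tendsto 0).comp h1
      have h3 := ENNReal.Tendsto.const_mul (a := C2) h2 (Or.inr hC2top)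
      rw [mul_zero] at h3
      have h4 := ENNReal.Tendsto.const_mul (a := ENNReal.ofReal Λ) h3
        (Or.inr ENNReal.ofReal_ne_top)
      rw [mul_zero] at h4
      exact h4
    have hT3 : Tendsto (fun ε : ℝ =>
        ENNReal.ofReal Λ * ENNReal.ofReal (Real.exp (-(C0 * (-Real.log ε) ^ (γ - β)))))
        (𝓝[>] (0:ℝ)) (𝓝 0) := by
      have h1 : Tendsto (fun ε : ℝ => -Real.log ε) (𝓝[>] (0:ℝ)) atTop :=
        tendsto_neg_atTop_iff.mpr Real.tendsto_log_nhdsGT_zero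
      have h2 : Tendsto (fun ε : ℝ => C0 * (-Real.log ε) ^ (γ - β)) (𝓝[>] (0:ℝ)) atTop :=
        Tendsto.const_mul_atTop hC0 ((tendsto_rpow_atTop (by linarith)).comp h1)
      have h3 : Tendsto (fun ε : ℝ => Real.exp (-(C0 * (-Real.log ε) ^ (γ - β))))
          (𝓝[>] (0:ℝ)) (𝓝 0) :=
        Real.tendsto_exp_atBot.comp (tendsto_neg_atTop_atBot.comp h2)
      have h4 : Tendsto (fun ε : ℝ =>
          ENNReal.ofReal (Real.exp (-(C0 * (-Real.log ε) ^ (γ - β))))) (𝓝[>] (0:ℝ)) (𝓝 0) := by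
        simpa [Function.comp_def] using (ENNReal.continuous_ofReal.tendsto 0).comp h3
      have h5 := ENNReal.Tendsto.const_mul (a := ENNReal.ofReal Λ) h4
        (Or.inr ENNReal.ofReal_ne_top)
      rw [mul_zero] at h5
      exact h5
    have := (hT1.add hT2).add hT3
    simpa using this
  have hmain : ∀ᶠ ε in 𝓝[>] (0:ℝ),
      sSup {t : ℝ≥0∞ | ∃ v : EucN N → ℝ, MemW Ω s p v ∧
          sobNorm Ω s p v ≤ ENNReal.ofReal ρ0 ∧
          t = ∫⁻ x in ball x0 ε ∩ Ω, ENNReal.ofReal (|v x| ^ q x)} ≤ B ε := by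
    filter_upwards [Ioo_mem_nhdsGT_of_mem (show (0:ℝ) ∈ Set.Ico (0:ℝ) ε₂ from ⟨le_refl _, hε₂0⟩)]
      with ε hε
    obtain ⟨hε0, hεlt⟩ := hε
    have hεη : ε < η := lt_of_lt_of_le hεlt ((min_le_left _ _).trans (min_le_left _ _))
    have hεrΩ : ε < rΩ := lt_of_lt_of_le hεlt ((min_le_left _ _).trans (min_le_right _ _))
    have hεε₁ : ε ≤ ε₁ :=
      le_of_lt (lt_of_lt_of_le hεlt ((min_le_right _ _).trans (min_le_left _ _)))
    have hεone : ε < 1 := lt_of_le_of_lt hεε₁ hε₁1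
    have hLε0 : 0 < -Real.log ε := by
      have := Real.log_neg hε0 hεone
      linarith
    apply sSup_le
    rintro t ⟨v, hvW, hvnorm, rfl⟩
    have hlux : luxNorm Ω (pCrit s p) v < ENNReal.ofReal lam := by
      calc luxNorm Ω (pCrit s p) v ≤ ENNReal.ofReal C * sobNorm Ω s p v := hCemb v hvW
        _ ≤ ENNReal.ofReal C * ENNReal.ofReal ρ0 := mul_le_mul_right hvnorm _
        _ = ENNReal.ofReal (C * ρ0) := (ENNReal.ofReal_mul hC.le).symm
        _ < ENNReal.ofReal lam := by
            rw [ENNReal.ofReal_lt_ofReal_iff hlam0, hlamdef]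
            linarith
    simp only [luxNorm] at hlux
    obtain ⟨l, hlmem, hllt⟩ := sInf_lt_iff.mp hlux
    obtain ⟨hl0, hltop, hlmod⟩ := hlmem
    have hltr : l.toReal < lam := (ENNReal.lt_ofReal_iff_toReal_lt hltop).mp hllt
    have hltr0 : 0 < l.toReal := ENNReal.toReal_pos hl0.ne' hltop
    have MB : (∫⁻ x in Ω, ENNReal.ofReal ((|v x| / lam) ^ pCrit s p x)) ≤ 1 := by
      refine le_trans ?_ hlmod
      simp only [nakanoModular]
      apply lintegral_mono_ae
      rw [ae_restrict_iff' hopen.measurableSet]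
      filter_upwards with x hx
      apply ENNReal.ofReal_le_ofReal
      have h1 : |v x| / lam ≤ |v x / l.toReal| := by
        rw [abs_div, abs_of_pos hltr0, div_le_div_iff₀ hlam0 hltr0]
        exact mul_le_mul_of_nonneg_left hltr.le (abs_nonneg _)
      exact Real.rpow_le_rpow (by positivity) h1 (hpc_bounds x (hsubcl hx)).1
    set Eε : ℝ := Real.exp (-(C0 * (-Real.log ε) ^ (γ - β))) with hEεdef
    have hEε0 : 0 < Eε := Real.exp_pos _
    have hpoint : ∀ x ∈ ball x0 ε ∩ Ω, x ≠ x0 →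
        |v x| ^ q x ≤ Λ + Λ * Real.exp (P * (-Real.log (dist x x0)) ^ γ)
          + Λ * Eε * ((|v x| / lam) ^ pCrit s p x) := by
      rintro x ⟨hxball, hxΩ⟩ hxne
      have hxcl : x ∈ closure Ω := hsubcl hxΩ
      have hr0 : 0 < dist x x0 := dist_pos.mpr hxne
      have hrε : dist x x0 < ε := mem_ball.mp hxball
      have hr1 : dist x x0 < 1 := lt_trans hrε hεone
      have hL0 : 0 < -Real.log (dist x x0) := by
        have := Real.log_neg hr0 hr1
        linarith
      have hLL : -Real.log ε ≤ -Real.log (dist x x0) := by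
        have := Real.log_le_log hr0 hrε.le
        linarith
      have hsph_sub : sphere x0 (dist x x0) ⊆ closure Ω := by
        intro y hy
        apply hsubcl
        apply hrΩ
        rw [mem_ball]
        rw [mem_sphere] at hy
        rw [hy]
        exact lt_trans hrε hεrΩ
      have hgap : q x ≤ pCrit s p x - C0 / (-Real.log (dist x x0)) ^ β := by
        have h1 : q x ≤ sSup (q '' sphere x0 (dist x x0)) :=
          le_csSup ((isCompact_sphere x0 _).bddAbove_image (hqc.mono hsph_sub))
            (Set.mem_image_of_mem q (mem_sphere.mpr rfl))
        have h2 : sInf (pCrit s p '' sphere x0 (dist x x0)) ≤ pCrit s p x := by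
          apply csInf_le
          · refine ⟨0, ?_⟩
            rintro w ⟨y, hy, rfl⟩
            exact (hpc_bounds y (hsph_sub hy)).1
          · exact Set.mem_image_of_mem _ (mem_sphere.mpr rfl)
        have h3 := hrate (dist x x0) hr0 (lt_trans hrε hεη)
        linarith
      set δ : ℝ := C0 / (-Real.log (dist x x0)) ^ β with hδdef
      have hδ0 : 0 ≤ δ := le_of_lt (div_pos hC0 (Real.rpow_pos_of_pos hL0 β))
      set w : ℝ := |v x| / lam with hwdef
      have hw0 : 0 ≤ w := by positivity
      have hq0 : 0 ≤ q x := by linarith [hq_lb x hxcl]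
      set a : ℝ := pCrit s p x - δ with hadef
      have hqa : q x ≤ a := hgap
      have ha0 : 0 ≤ a := le_trans hq0 hqa
      have haP : a + δ ≤ P := by
        have := (hpc_bounds x hxcl).2
        rw [hadef]
        linarith
      set T : ℝ := Real.exp ((-Real.log (dist x x0)) ^ γ) with hTdef
      have hT1 : 1 ≤ T := Real.one_le_exp (Real.rpow_nonneg hL0.le _)
      have step1 : w ^ q x ≤ 1 + w ^ a := by
        rcases le_total w 1 with h | h
        · have h4 := Real.rpow_le_one hw0 h hq0
          have h5 : 0 ≤ w ^ a := Real.rpow_nonneg hw0 _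
          linarith
        · have h4 := Real.rpow_le_rpow_of_exponent_le h hqa
          linarith
      have step2 : w ^ a ≤ T ^ P + w ^ (a + δ) * T ^ (-δ) :=
        stmt12Aux_rpow_split hw0 hT1 ha0 hδ0 haP
      have step3 : T ^ P = Real.exp (P * (-Real.log (dist x x0)) ^ γ) := by
        rw [hTdef, Real.rpow_def_of_pos (Real.exp_pos _), Real.log_exp, mul_comm]
      have step4 : T ^ (-δ) ≤ Eε := by
        have e1 : T ^ (-δ) = Real.exp (-(C0 * (-Real.log (dist x x0)) ^ (γ - β))) := by
          rw [hTdef, Real.rpow_def_of_pos (Real.exp_pos _), Real.log_exp]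
          congr 1
          rw [hδdef, Real.rpow_sub hL0]
          ring
        rw [e1, hEεdef]
        apply Real.exp_le_exp.mpr
        have h5 : (-Real.log ε) ^ (γ - β) ≤ (-Real.log (dist x x0)) ^ (γ - β) :=
          Real.rpow_le_rpow hLε0.le hLL (by linarith)
        have h6 := mul_le_mul_of_nonneg_left h5 hC0.le
        linarith
      have step5 : a + δ = pCrit s p x := by rw [hadef]; ring
      have hwa : w ^ q x ≤ 1 + Real.exp (P * (-Real.log (dist x x0)) ^ γ)
          + w ^ pCrit s p x * Eε := by
        have h6 : 0 ≤ w ^ pCrit s p x := Real.rpow_nonneg hw0 _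
        have h7 : w ^ (a + δ) * T ^ (-δ) ≤ w ^ pCrit s p x * Eε := by
          rw [step5]
          exact mul_le_mul_of_nonneg_left step4 h6
        rw [step3] at step2
        linarith
      have hvx : |v x| = lam * w := by
        rw [hwdef]
        field_simp
      have hlamq : lam ^ q x ≤ Λ := by
        rw [hΛdef]
        exact Real.rpow_le_rpow_of_exponent_le hlam1 (hq_ub x hxcl)
      calc |v x| ^ q x = (lam * w) ^ q x := by rw [← hvx]
        _ = lam ^ q x * w ^ q x := Real.mul_rpow (by linarith) hw0
        _ ≤ Λ * (1 + Real.exp (P * (-Real.log (dist x x0)) ^ γ) + w ^ pCrit s p x * Eε) :=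
            mul_le_mul hlamq hwa (Real.rpow_nonneg hw0 _) hΛ0
        _ = Λ + Λ * Real.exp (P * (-Real.log (dist x x0)) ^ γ)
            + Λ * Eε * (w ^ pCrit s p x) := by ring
    have hSmeas : MeasurableSet (ball x0 ε ∩ Ω) :=
      measurableSet_ball.inter hopen.measurableSet
    have hdistmeas : Measurable fun x : EucN N => dist x x0 :=
      (continuous_id.dist continuous_const).measurable
    have hrpowcont : Continuous fun y : ℝ => y ^ γ :=
      continuous_iff_continuousAt.mpr fun y => Real.continuousAt_rpow_const y γ (Or.inr hγ0.le)
    have hgmeas : Measurable fun x : EucN N =>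
        ENNReal.ofReal (Λ * Real.exp (P * (-Real.log (dist x x0)) ^ γ)) := by
      apply Measurable.ennreal_ofReal
      apply Measurable.const_mul
      apply Real.measurable_exp.comp
      apply Measurable.const_mul
      exact hrpowcont.measurable.comp (Real.measurable_log.comp hdistmeas).neg
    have hne : ∀ᵐ x : EucN N, x ≠ x0 := by
      rw [ae_iff]
      simpa [not_not] using stmt12Aux_vol_singleton hN x0
    have hstep1 : (∫⁻ x in ball x0 ε ∩ Ω, ENNReal.ofReal (|v x| ^ q x)) ≤
        ∫⁻ x in ball x0 ε ∩ Ω,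
          (ENNReal.ofReal Λ
            + ENNReal.ofReal (Λ * Real.exp (P * (-Real.log (dist x x0)) ^ γ))
            + ENNReal.ofReal (Λ * Eε) * ENNReal.ofReal ((|v x| / lam) ^ pCrit s p x)) := by
      apply lintegral_mono_ae
      rw [ae_restrict_iff' hSmeas]
      filter_upwards [hne] with x hxne hxmem
      calc ENNReal.ofReal (|v x| ^ q x)
          ≤ ENNReal.ofReal (Λ + Λ * Real.exp (P * (-Real.log (dist x x0)) ^ γ)
              + Λ * Eε * ((|v x| / lam) ^ pCrit s p x)) :=
            ENNReal.ofReal_le_ofReal (hpoint x hxmem hxne)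
        _ ≤ _ := by
            refine le_trans ENNReal.ofReal_add_le ?_
            apply add_le_add
            · exact ENNReal.ofReal_add_le
            · exact le_of_eq (ENNReal.ofReal_mul (by positivity))
    have hstep2 : (∫⁻ x in ball x0 ε ∩ Ω,
        (ENNReal.ofReal Λ
          + ENNReal.ofReal (Λ * Real.exp (P * (-Real.log (dist x x0)) ^ γ))
          + ENNReal.ofReal (Λ * Eε) * ENNReal.ofReal ((|v x| / lam) ^ pCrit s p x)))
        = (∫⁻ _ in ball x0 ε ∩ Ω, ENNReal.ofReal Λ)
          + (∫⁻ x in ball x0 ε ∩ Ω,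
              ENNReal.ofReal (Λ * Real.exp (P * (-Real.log (dist x x0)) ^ γ)))
          + (∫⁻ x in ball x0 ε ∩ Ω,
              ENNReal.ofReal (Λ * Eε) * ENNReal.ofReal ((|v x| / lam) ^ pCrit s p x)) := by
      rw [lintegral_add_left (f := fun x => ENNReal.ofReal Λ
          + ENNReal.ofReal (Λ * Real.exp (P * (-Real.log (dist x x0)) ^ γ)))
          (measurable_const.add hgmeas), lintegral_add_left measurable_const]
    have I1 : (∫⁻ _ in ball x0 ε ∩ Ω, ENNReal.ofReal Λ)
        ≤ ENNReal.ofReal Λ * volume (ball x0 ε) := by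
      rw [setLIntegral_const]
      exact mul_le_mul_right (measure_mono Set.inter_subset_left) _
    have I2 : (∫⁻ x in ball x0 ε ∩ Ω,
          ENNReal.ofReal (Λ * Real.exp (P * (-Real.log (dist x x0)) ^ γ)))
        ≤ ENNReal.ofReal Λ * (C2 * ENNReal.ofReal (ε ^ ((N:ℝ)/2))) := by
      calc (∫⁻ x in ball x0 ε ∩ Ω,
            ENNReal.ofReal (Λ * Real.exp (P * (-Real.log (dist x x0)) ^ γ)))
          = ∫⁻ x in ball x0 ε ∩ Ω, ENNReal.ofReal Λ *
              ENNReal.ofReal (Real.exp (P * (-Real.log (dist x x0)) ^ γ)) := by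
            simp_rw [ENNReal.ofReal_mul hΛ0]
        _ = ENNReal.ofReal Λ * ∫⁻ x in ball x0 ε ∩ Ω,
              ENNReal.ofReal (Real.exp (P * (-Real.log (dist x x0)) ^ γ)) :=
            lintegral_const_mul' _ _ ENNReal.ofReal_ne_top
        _ ≤ ENNReal.ofReal Λ * ∫⁻ x in ball x0 ε,
              ENNReal.ofReal (Real.exp (P * (-Real.log (dist x x0)) ^ γ)) :=
            mul_le_mul_right (lintegral_mono_set Set.inter_subset_left) _
        _ ≤ ENNReal.ofReal Λ * (C2 * ENNReal.ofReal (ε ^ ((N:ℝ)/2))) :=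
            mul_le_mul_right (hJ ε hε0 hεε₁) _
    have I3 : (∫⁻ x in ball x0 ε ∩ Ω,
          ENNReal.ofReal (Λ * Eε) * ENNReal.ofReal ((|v x| / lam) ^ pCrit s p x))
        ≤ ENNReal.ofReal Λ * ENNReal.ofReal Eε := by
      calc (∫⁻ x in ball x0 ε ∩ Ω,
            ENNReal.ofReal (Λ * Eε) * ENNReal.ofReal ((|v x| / lam) ^ pCrit s p x))
          = ENNReal.ofReal (Λ * Eε) * ∫⁻ x in ball x0 ε ∩ Ω,
              ENNReal.ofReal ((|v x| / lam) ^ pCrit s p x) :=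
            lintegral_const_mul' _ _ ENNReal.ofReal_ne_top
        _ ≤ ENNReal.ofReal (Λ * Eε) * ∫⁻ x in Ω,
              ENNReal.ofReal ((|v x| / lam) ^ pCrit s p x) :=
            mul_le_mul_right (lintegral_mono_set Set.inter_subset_right) _
        _ ≤ ENNReal.ofReal (Λ * Eε) * 1 := mul_le_mul_right MB _
        _ = ENNReal.ofReal Λ * ENNReal.ofReal Eε := by
            rw [mul_one, ENNReal.ofReal_mul hΛ0]
    calc (∫⁻ x in ball x0 ε ∩ Ω, ENNReal.ofReal (|v x| ^ q x))
        ≤ _ := hstep1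
      _ = _ := hstep2
      _ ≤ B ε := by
          rw [hBdef]
          exact add_le_add (add_le_add I1 I2) I3
  exact tendsto_of_tendsto_of_tendsto_of_le_of_le' tendsto_const_nhds hBtendsto
    (Filter.Eventually.of_forall fun ε => zero_le) hmain
end
end

section
/- Let s, p : ℝ^N×ℝ^N → ℝ be symmetric measurable functions with 0 < s^- ≤ s^+ < 1 < p^- ≤ p^+ < N/s^+, write p(x) := p(x,x), s(x) := s(x,x), let φ ∈ C_c^∞(ℝ^N) with χ_{B_{1/2}(0)} ≤ φ ≤ χ_{B_1(0)}, and define φ_n(x) := n^{(N−p(x)s(x))/p(x)}·φ(nx). Then for every n ≥ 1: ∫_{ℝ^N} |φ_n(x)|^{p^-} dx ≤ |B_1(0)|·n^{−p^- s^-}. In particular ‖φ_n‖_{L^{p^-}(ℝ^N)} → 0 as n → ∞. -/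
open MeasureTheory Filter Set Metric Topology
open scoped ENNReal NNReal

noncomputable section

variable {N : ℕ}

/-- `∫ |φ_n|^{p⁻} ≤ |B_1| n^{−p⁻s⁻}` and `‖φ_n‖_{L^{p⁻}} → 0`. -/
theorem stmt14 {N : ℕ}
    (s p : EucN N → EucN N → ℝ) (hssymm : SymmFun s) (hpsymm : SymmFun p)
    (hsmeas : Measurable (fun z : EucN N × EucN N => s z.1 z.2))
    (hpmeas : Measurable (fun z : EucN N × EucN N => p z.1 z.2))
    (sm sp pm pp : ℝ)
    (hsm : sm = sInf (Set.range fun z : EucN N × EucN N => s z.1 z.2))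
    (hsp : sp = sSup (Set.range fun z : EucN N × EucN N => s z.1 z.2))
    (hpm : pm = sInf (Set.range fun z : EucN N × EucN N => p z.1 z.2))
    (hpp : pp = sSup (Set.range fun z : EucN N × EucN N => p z.1 z.2))
    (hs0 : 0 < sm) (hs2 : sm ≤ sp) (hs1 : sp < 1)
    (hp1 : 1 < pm) (hp2 : pm ≤ pp) (hpN : pp < (N : ℝ) / sp)
    (φ : EucN N → ℝ) (hφsm : ContDiff ℝ (⊤ : ℕ∞) φ) (hφc : HasCompactSupport φ)
    (hφ1 : ∀ x ∈ ball (0 : EucN N) (1 / 2), φ x = 1)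
    (hφ2 : ∀ x : EucN N, x ∉ ball (0 : EucN N) 1 → φ x = 0)
    (hφ3 : ∀ x : EucN N, 0 ≤ φ x ∧ φ x ≤ 1) :
    (∀ n : ℕ, 1 ≤ n →
      (∫⁻ x : EucN N, ENNReal.ofReal (|testFn p s φ n x| ^ pm)) ≤
        volume (ball (0 : EucN N) 1) * ENNReal.ofReal ((n : ℝ) ^ (-(pm * sm)))) ∧
    Tendsto (fun n : ℕ =>
        (∫⁻ x : EucN N, ENNReal.ofReal (|testFn p s φ n x| ^ pm)) ^ (1 / pm)) atTop (𝓝 0) := by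
  have hpm0 : (0:ℝ) < pm := zero_lt_one.trans hp1
  have hsm0 : (0:ℝ) < sm := hs0
  -- lower bounds on p and s
  have hpbdd : BddBelow (Set.range fun z : EucN N × EucN N => p z.1 z.2) := by
    by_contra h
    rw [Real.sInf_of_not_bddBelow h] at hpm
    rw [hpm] at hp1; linarith
  have hsbdd : BddBelow (Set.range fun z : EucN N × EucN N => s z.1 z.2) := by
    by_contra h
    rw [Real.sInf_of_not_bddBelow h] at hsm
    rw [hsm] at hs0; linarith
  have hple : ∀ x : EucN N, pm ≤ p x x := fun x =>
    hpm ▸ csInf_le hpbdd ⟨(x, x), rfl⟩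
  have hsle : ∀ x : EucN N, sm ≤ s x x := fun x =>
    hsm ▸ csInf_le hsbdd ⟨(x, x), rfl⟩
  have hp0 : ∀ x : EucN N, (0:ℝ) < p x x := fun x => hpm0.trans_le (hple x)
  -- the key estimate
  have key : ∀ n : ℕ, 1 ≤ n →
      (∫⁻ x : EucN N, ENNReal.ofReal (|testFn p s φ n x| ^ pm)) ≤
        volume (ball (0 : EucN N) 1) * ENNReal.ofReal ((n : ℝ) ^ (-(pm * sm))) := by
    intro n hn
    have hn1 : (1:ℝ) ≤ (n:ℝ) := by exact_mod_cast hn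
    have hn0 : (0:ℝ) < (n:ℝ) := lt_of_lt_of_le zero_lt_one hn1
    -- pointwise bound
    have hpt : ∀ x : EucN N, ENNReal.ofReal (|testFn p s φ n x| ^ pm) ≤
        (ball (0 : EucN N) (1 / n)).indicator
          (fun _ => ENNReal.ofReal ((n:ℝ) ^ ((N:ℝ) - pm * sm))) x := by
      intro x
      by_cases hx : x ∈ ball (0 : EucN N) (1 / n)
      · rw [Set.indicator_of_mem hx]
        apply ENNReal.ofReal_le_ofReal
        have habs : |testFn p s φ n x| ≤ (n:ℝ) ^ (((N:ℝ) - p x x * s x x) / p x x) := by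
          simp only [testFn]
          rw [abs_mul, abs_of_nonneg (Real.rpow_nonneg hn0.le _)]
          calc (n:ℝ) ^ (((N:ℝ) - p x x * s x x) / p x x) * |φ ((n:ℝ) • x)|
              ≤ (n:ℝ) ^ (((N:ℝ) - p x x * s x x) / p x x) * 1 := by
                apply mul_le_mul_of_nonneg_left _ (Real.rpow_nonneg hn0.le _)
                rw [abs_of_nonneg (hφ3 _).1]; exact (hφ3 _).2
            _ = _ := mul_one _
        calc |testFn p s φ n x| ^ pm
            ≤ ((n:ℝ) ^ (((N:ℝ) - p x x * s x x) / p x x)) ^ pm :=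
              Real.rpow_le_rpow (abs_nonneg _) habs hpm0.le
          _ = (n:ℝ) ^ ((((N:ℝ) - p x x * s x x) / p x x) * pm) :=
              (Real.rpow_mul hn0.le _ _).symm
          _ ≤ (n:ℝ) ^ ((N:ℝ) - pm * sm) := by
              apply Real.rpow_le_rpow_of_exponent_le hn1
              rw [div_mul_eq_mul_div, div_le_iff₀ (hp0 x)]
              nlinarith [mul_le_mul_of_nonneg_left (hple x) (Nat.cast_nonneg (α := ℝ) N),
                mul_le_mul_of_nonneg_left (hsle x) (mul_pos (hp0 x) hpm0).le]
      · rw [Set.indicator_of_notMem hx]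
        have hφ0 : φ ((n:ℝ) • x) = 0 := by
          apply hφ2
          simp only [mem_ball, dist_zero_right, not_lt] at hx ⊢
          rw [norm_smul, Real.norm_eq_abs, abs_of_pos hn0]
          calc (1:ℝ) = (n:ℝ) * (1 / n) := by field_simp
            _ ≤ (n:ℝ) * ‖x‖ := mul_le_mul_of_nonneg_left hx hn0.le
        simp only [testFn]
        rw [hφ0, mul_zero, abs_zero, Real.zero_rpow hpm0.ne', ENNReal.ofReal_zero]
    calc (∫⁻ x : EucN N, ENNReal.ofReal (|testFn p s φ n x| ^ pm))
        ≤ ∫⁻ x : EucN N, (ball (0 : EucN N) (1 / n)).indicator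
            (fun _ => ENNReal.ofReal ((n:ℝ) ^ ((N:ℝ) - pm * sm))) x :=
          lintegral_mono hpt
      _ = ENNReal.ofReal ((n:ℝ) ^ ((N:ℝ) - pm * sm)) * volume (ball (0 : EucN N) (1 / n)) := by
          rw [lintegral_indicator measurableSet_ball, setLIntegral_const]
      _ = volume (ball (0 : EucN N) 1) * ENNReal.ofReal ((n : ℝ) ^ (-(pm * sm))) := by
          rw [Measure.addHaar_ball_of_pos volume (0 : EucN N) (by positivity : (0:ℝ) < 1 / n)]
          rw [finrank_euclideanSpace_fin]
          rw [← mul_assoc, mul_comm (volume (ball (0 : EucN N) 1)),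
            ← ENNReal.ofReal_mul (Real.rpow_nonneg hn0.le _)]
          congr 2
          rw [← Real.rpow_natCast (1 / (n:ℝ)) N, one_div, Real.inv_rpow hn0.le,
            ← Real.rpow_neg hn0.le, ← Real.rpow_add hn0]
          ring_nf
  refine ⟨key, ?_⟩
  -- the tendsto part
  set C := volume (ball (0 : EucN N) 1) with hC
  have hCfin : C ≠ ⊤ := measure_ball_lt_top.ne
  have hub : ∀ᶠ n : ℕ in atTop,
      (∫⁻ x : EucN N, ENNReal.ofReal (|testFn p s φ n x| ^ pm)) ^ (1 / pm) ≤
        C ^ (1 / pm) * ENNReal.ofReal ((n:ℝ) ^ (-sm)) := by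
    filter_upwards [eventually_ge_atTop 1] with n hn
    have hn0 : (0:ℝ) < (n:ℝ) := by exact_mod_cast hn
    calc (∫⁻ x : EucN N, ENNReal.ofReal (|testFn p s φ n x| ^ pm)) ^ (1 / pm)
        ≤ (C * ENNReal.ofReal ((n : ℝ) ^ (-(pm * sm)))) ^ (1 / pm) :=
          ENNReal.rpow_le_rpow (key n hn) (by positivity)
      _ = C ^ (1 / pm) * (ENNReal.ofReal ((n:ℝ) ^ (-(pm * sm)))) ^ (1 / pm) :=
          ENNReal.mul_rpow_of_nonneg _ _ (by positivity)
      _ = C ^ (1 / pm) * ENNReal.ofReal (((n:ℝ) ^ (-(pm * sm))) ^ (1 / pm)) := by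
          rw [← ENNReal.ofReal_rpow_of_nonneg (Real.rpow_nonneg hn0.le _) (by positivity)]
      _ = C ^ (1 / pm) * ENNReal.ofReal ((n:ℝ) ^ (-sm)) := by
          have he : -(pm * sm) * (1 / pm) = -sm := by
            rw [mul_one_div, mul_comm pm sm, neg_div, mul_div_assoc,
              div_self hpm0.ne', mul_one]
          rw [← Real.rpow_mul hn0.le, he]
  have hlim : Tendsto (fun n : ℕ => C ^ (1 / pm) * ENNReal.ofReal ((n:ℝ) ^ (-sm)))
      atTop (𝓝 0) := by
    have h1 : Tendsto (fun n : ℕ => ((n:ℝ) ^ (-sm))) atTop (𝓝 0) :=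
      (tendsto_rpow_neg_atTop hsm0).comp tendsto_natCast_atTop_atTop
    have h2 : Tendsto (fun n : ℕ => ENNReal.ofReal ((n:ℝ) ^ (-sm))) atTop (𝓝 0) := by
      rw [← ENNReal.ofReal_zero]
      exact (ENNReal.continuous_ofReal.tendsto 0).comp h1
    have h3 := ENNReal.Tendsto.const_mul (a := C ^ (1 / pm)) h2
      (Or.inr (ENNReal.rpow_ne_top_of_nonneg (one_div_pos.mpr hpm0).le hCfin))
    simpa using h3
  exact tendsto_of_tendsto_of_tendsto_of_le_of_le' tendsto_const_nhds hlim
    (Eventually.of_forall fun n => zero_le) hub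
end
end

section
/- Let Ω ⊂ ℝ^N be a bounded domain with 0 ∈ B_1(0) ⊆ Ω, and let s, p : Ω̄×Ω̄ → ℝ be symmetric measurable functions with 0 < s^- ≤ s^+ < 1 < p^- ≤ p^+ < N/s^+. Write p(x) := p(x,x), s(x) := s(x,x) and p_s^*(x) := N p(x)/(N − p(x)s(x)). Let q : Ω → ℝ be measurable and suppose there are constants C_0 > 0 and η ∈ (0,1) such that q(x) ≥ p_s^*(x) − C_0/log(1/|x|) for almost every x ∈ B_η(0)∖{0}. Let φ ∈ C_c^∞(ℝ^N) with χ_{B_{1/2}(0)} ≤ φ ≤ χ_{B_1(0)} and φ_n(x) := n^{(N−p(x)s(x))/p(x)}·φ(nx). Then there exists n_0 ∈ ℕ such that for all n ≥ n_0: ∫_Ω |φ_n(x)|^{q(x)} dx ≥ exp(−2C_0·(N − p^- s^-)/p^-)·|B_{1/2}(0)∖B_{1/4}(0)| > 0. -/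
open MeasureTheory Filter Set Metric Topology
open scoped ENNReal NNReal

noncomputable section

variable {N : ℕ}

open scoped Pointwise in
lemma annulus_scale {N : ℕ} (n : ℕ) (hnpos : (0:ℝ) < (n:ℝ)) :
    volume (ball (0 : EucN N) (1 / 2) \ ball (0 : EucN N) (1 / 4)) =
      ENNReal.ofReal ((n : ℝ) ^ N) *
        volume (ball (0 : EucN N) (1 / (2 * (n : ℝ))) \ ball 0 (1 / (4 * (n : ℝ)))) := by
  have hc : ((n : ℝ)⁻¹ : ℝ) ≠ 0 := inv_ne_zero hnpos.ne'
  have h1 : ball (0 : EucN N) (1 / (2 * (n : ℝ))) \ ball 0 (1 / (4 * (n : ℝ)))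
      = ((n : ℝ)⁻¹ : ℝ) • (ball (0 : EucN N) (1 / 2) \ ball (0 : EucN N) (1 / 4)) := by
    rw [Set.smul_set_sdiff₀ hc, _root_.smul_ball hc, _root_.smul_ball hc, smul_zero]
    have hn : ‖((n : ℝ)⁻¹ : ℝ)‖ = (n : ℝ)⁻¹ := by
      rw [Real.norm_eq_abs, abs_of_pos (inv_pos.mpr hnpos)]
    rw [hn]
    congr 1 <;> · congr 1; field_simp
  rw [h1, Measure.addHaar_smul, finrank_euclideanSpace_fin, ← mul_assoc,
    ← ENNReal.ofReal_mul (by positivity)]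
  have h2 : (n : ℝ) ^ N * |(n : ℝ)⁻¹ ^ N| = 1 := by
    rw [abs_of_pos (pow_pos (inv_pos.mpr hnpos) N), ← mul_pow, mul_inv_cancel₀ hnpos.ne',
      one_pow]
  rw [h2, ENNReal.ofReal_one, one_mul]

lemma pointwise_bound (N n : ℕ) (pm sm a b C0 L qx : ℝ)
    (hpm0 : 0 < pm) (hC0 : 0 < C0) (hs0 : 0 < sm)
    (ha1 : pm ≤ a) (hb1 : sm ≤ b)
    (hab : a * b < (N : ℝ)) (hpmsm : pm * sm < (N : ℝ))
    (hn1 : (1 : ℝ) ≤ (n : ℝ))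
    (hLpos : 0 < L) (hlogn : Real.log (n : ℝ) ≤ L)
    (hq : (N : ℝ) * a / ((N : ℝ) - a * b) - C0 / L ≤ qx) :
    (n : ℝ) ^ N * Real.exp (-2 * C0 * ((N : ℝ) - pm * sm) / pm) ≤
      ((n : ℝ) ^ (((N : ℝ) - a * b) / a)) ^ qx := by
  have hnpos : (0 : ℝ) < (n : ℝ) := by linarith
  have hapos : 0 < a := by linarith
  have hbpos : 0 < b := by linarith
  have hN0 : (0 : ℝ) ≤ (N : ℝ) := by nlinarith
  set β := ((N : ℝ) - a * b) / a with hβ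
  have hβpos : 0 < β := div_pos (by linarith) hapos
  have hlognn : 0 ≤ Real.log (n : ℝ) := Real.log_nonneg hn1
  have hβub : β ≤ ((N : ℝ) - pm * sm) / pm := by
    rw [hβ, div_le_div_iff₀ hapos hpm0]
    nlinarith [mul_nonneg (mul_nonneg hpm0.le hapos.le) (sub_nonneg.mpr hb1),
      mul_nonneg hN0 (sub_nonneg.mpr ha1)]
  have hpCrit : β * ((N : ℝ) * a / ((N : ℝ) - a * b)) = (N : ℝ) := by
    have hne : (N : ℝ) - a * b ≠ 0 := by linarith
    rw [hβ]
    field_simp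
  rw [← Real.rpow_natCast (n : ℝ) N, ← Real.rpow_mul hnpos.le β qx]
  have step1 : (n : ℝ) ^ ((N : ℝ) - β * C0 / L) ≤ (n : ℝ) ^ (β * qx) := by
    apply Real.rpow_le_rpow_of_exponent_le hn1
    have h6 : β * ((N : ℝ) * a / ((N : ℝ) - a * b) - C0 / L) ≤ β * qx :=
      mul_le_mul_of_nonneg_left hq hβpos.le
    calc (N : ℝ) - β * C0 / L = β * ((N : ℝ) * a / ((N : ℝ) - a * b) - C0 / L) := by
          rw [mul_sub, hpCrit]; ring
      _ ≤ β * qx := h6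
  refine le_trans ?_ step1
  rw [show ((N : ℕ) : ℝ) - β * C0 / L = ((N : ℕ) : ℝ) + -(β * C0 / L) by ring,
    Real.rpow_add hnpos]
  apply mul_le_mul_of_nonneg_left _ (by positivity)
  rw [Real.rpow_def_of_pos hnpos]
  apply Real.exp_le_exp.mpr
  have h5 : β * C0 / L * Real.log (n : ℝ) ≤ β * C0 := by
    rw [div_mul_eq_mul_div, div_le_iff₀ hLpos]
    nlinarith [mul_le_mul_of_nonneg_left hlogn (mul_nonneg hβpos.le hC0.le)]
  have h6 : β * C0 ≤ 2 * C0 * ((N : ℝ) - pm * sm) / pm := by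
    rw [le_div_iff₀ hpm0]
    have hβpm : β * pm ≤ (N : ℝ) - pm * sm := (le_div_iff₀ hpm0).mp hβub
    nlinarith [mul_le_mul_of_nonneg_right hβpm hC0.le]
  have h7 : -2 * C0 * ((N : ℝ) - pm * sm) / pm = -(2 * C0 * ((N : ℝ) - pm * sm) / pm) := by
    ring
  rw [h7]
  nlinarith [h5, h6]

/-- uniform positive lower bound for `∫_Ω |φ_n|^{q(x)}` when `q` is
critically close to `p_s^*` near `0`. -/
theorem stmt15 {N : ℕ} (Ω : Set (EucN N)) (hopen : IsOpen Ω) (hconn : IsConnected Ω)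
    (hbdd : Bornology.IsBounded Ω) (hball : ball (0 : EucN N) 1 ⊆ Ω)
    (s p : EucN N → EucN N → ℝ) (hssymm : SymmFun s) (hpsymm : SymmFun p)
    (hsmeas : Measurable (fun z : EucN N × EucN N => s z.1 z.2))
    (hpmeas : Measurable (fun z : EucN N × EucN N => p z.1 z.2))
    (sm pm : ℝ)
    (hsm : sm = inf2 (closure Ω) s) (hpm : pm = inf2 (closure Ω) p)
    (hs0 : 0 < sm) (hs1 : sup2 (closure Ω) s < 1) (hs2 : sm ≤ sup2 (closure Ω) s)
    (hp1 : 1 < pm) (hp2 : pm ≤ sup2 (closure Ω) p)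
    (hpN : sup2 (closure Ω) p < (N : ℝ) / sup2 (closure Ω) s)
    (q : EucN N → ℝ) (hqm : Measurable q) (C0 η : ℝ) (hC0 : 0 < C0) (hη0 : 0 < η) (hη1 : η < 1)
    (hae : ∀ᵐ x ∂(volume.restrict (ball (0 : EucN N) η \ {0})),
      pCrit s p x - C0 / Real.log (1 / dist x (0 : EucN N)) ≤ q x)
    (φ : EucN N → ℝ) (hφsm : ContDiff ℝ (⊤ : ℕ∞) φ) (hφc : HasCompactSupport φ)
    (hφ1 : ∀ x ∈ ball (0 : EucN N) (1 / 2), φ x = 1)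
    (hφ2 : ∀ x : EucN N, x ∉ ball (0 : EucN N) 1 → φ x = 0)
    (hφ3 : ∀ x : EucN N, 0 ≤ φ x ∧ φ x ≤ 1) :
    ∃ n0 : ℕ,
      0 < Real.exp (-2 * C0 * ((N : ℝ) - pm * sm) / pm) *
        (volume (ball (0 : EucN N) (1 / 2) \ ball (0 : EucN N) (1 / 4))).toReal ∧
      ∀ n : ℕ, n0 ≤ n →
        ENNReal.ofReal (Real.exp (-2 * C0 * ((N : ℝ) - pm * sm) / pm) *
            (volume (ball (0 : EucN N) (1 / 2) \ ball (0 : EucN N) (1 / 4))).toReal) ≤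
          ∫⁻ x in Ω, ENNReal.ofReal (|testFn p s φ n x| ^ q x) := by
  classical
  have h0Ω : (0 : EucN N) ∈ Ω := hball (mem_ball_self one_pos)
  have h0c : (0 : EucN N) ∈ closure Ω := subset_closure h0Ω
  -- boundedness of the exponent sets
  have hbbp : BddBelow (Set.image2 p (closure Ω) (closure Ω)) := by
    by_contra h
    rw [hpm] at hp1
    rw [show inf2 (closure Ω) p = 0 from Real.sInf_of_not_bddBelow h] at hp1
    linarith
  have hbbs : BddBelow (Set.image2 s (closure Ω) (closure Ω)) := by
    by_contra h
    rw [hsm] at hs0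
    rw [show inf2 (closure Ω) s = 0 from Real.sInf_of_not_bddBelow h] at hs0
    linarith
  have hbap : BddAbove (Set.image2 p (closure Ω) (closure Ω)) := by
    by_contra h
    rw [show sup2 (closure Ω) p = 0 from Real.sSup_of_not_bddAbove h] at hp2
    linarith
  have hbas : BddAbove (Set.image2 s (closure Ω) (closure Ω)) := by
    by_contra h
    rw [show sup2 (closure Ω) s = 0 from Real.sSup_of_not_bddAbove h] at hs2
    linarith
  set Sp := sup2 (closure Ω) p with hSp
  set Ss := sup2 (closure Ω) s with hSs
  have hSspos : 0 < Ss := lt_of_lt_of_le hs0 hs2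
  have hSp1 : (1 : ℝ) < Sp := lt_of_lt_of_le hp1 hp2
  have hNpos : (0 : ℝ) < (N : ℝ) := by
    have h1 : (0 : ℝ) < (N : ℝ) / Ss := lt_trans (by linarith) hpN
    have h2 := mul_pos h1 hSspos
    rwa [div_mul_cancel₀ _ hSspos.ne'] at h2
  have hN0 : 0 < N := by exact_mod_cast hNpos
  have hprod : Sp * Ss < (N : ℝ) := (lt_div_iff₀ hSspos).mp hpN
  have hpmsm : pm * sm < (N : ℝ) := by
    have : pm * sm ≤ Sp * Ss :=
      mul_le_mul hp2 hs2 hs0.le (by linarith)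
    linarith
  have hpm0 : (0 : ℝ) < pm := by linarith
  set K := Real.exp (-2 * C0 * ((N : ℝ) - pm * sm) / pm) with hKdef
  have hKpos : 0 < K := Real.exp_pos _
  -- the reference annulus has positive finite volume
  have hVfin : volume (ball (0 : EucN N) (1 / 2) \ ball (0 : EucN N) (1 / 4)) ≠ ⊤ :=
    ((measure_mono diff_subset).trans_lt measure_ball_lt_top).ne
  have hannpos : 0 < volume (ball (0 : EucN N) (1 / 2) \ ball (0 : EucN N) (1 / 4)) := by
    set x0 : EucN N := EuclideanSpace.single (⟨0, hN0⟩ : Fin N) (3 / 8 : ℝ) with hx0def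
    have hx0 : ‖x0‖ = 3 / 8 := by
      rw [hx0def, EuclideanSpace.norm_single]; norm_num
    have hsub : ball x0 (1 / 8) ⊆ ball (0 : EucN N) (1 / 2) \ ball (0 : EucN N) (1 / 4) := by
      intro y hy
      rw [mem_ball, dist_eq_norm] at hy
      have h1 : ‖y‖ ≤ ‖y - x0‖ + ‖x0‖ := by simpa using norm_add_le (y - x0) x0
      have h2 : ‖x0‖ ≤ ‖x0 - y‖ + ‖y‖ := by simpa using norm_add_le (x0 - y) y
      rw [norm_sub_rev x0 y] at h2
      constructor
      · rw [mem_ball_zero_iff]; rw [hx0] at h1; linarith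
      · rw [mem_ball_zero_iff]; rw [hx0] at h2; intro hlt; linarith
    exact lt_of_lt_of_le (measure_ball_pos volume x0 (by norm_num)) (measure_mono hsub)
  have hVpos : 0 < (volume (ball (0 : EucN N) (1 / 2) \ ball (0 : EucN N) (1 / 4))).toReal :=
    ENNReal.toReal_pos hannpos.ne' hVfin
  refine ⟨max 2 ⌈η⁻¹⌉₊, mul_pos hKpos hVpos, ?_⟩
  intro n hn
  have hn2 : 2 ≤ n := le_trans (le_max_left _ _) hn
  have hnceil : ⌈η⁻¹⌉₊ ≤ n := le_trans (le_max_right _ _) hn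
  have hn1' : (1 : ℝ) ≤ (n : ℝ) := by exact_mod_cast le_trans (by norm_num) hn2
  have hnpos : (0 : ℝ) < (n : ℝ) := by linarith
  have hnη : η⁻¹ ≤ (n : ℝ) := le_trans (Nat.le_ceil _) (by exact_mod_cast hnceil)
  set A : Set (EucN N) := ball (0 : EucN N) (1 / (2 * (n : ℝ))) \ ball 0 (1 / (4 * (n : ℝ)))
    with hAdef
  have hAmeas : MeasurableSet A := measurableSet_ball.diff measurableSet_ball
  -- scaling identity for the annulus volume
  have hscale : volume (ball (0 : EucN N) (1 / 2) \ ball (0 : EucN N) (1 / 4)) =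
      ENNReal.ofReal ((n : ℝ) ^ N) * volume A := by
    rw [hAdef]; exact annulus_scale n hnpos
  -- set inclusions
  have hAsub : A ⊆ ball (0 : EucN N) η \ {0} := by
    rintro x ⟨hx1, hx2⟩
    rw [mem_ball_zero_iff] at hx1
    have hx2' : 1 / (4 * (n : ℝ)) ≤ ‖x‖ := by
      by_contra h
      exact hx2 (mem_ball_zero_iff.mpr (by linarith))
    have hxpos : 0 < ‖x‖ := lt_of_lt_of_le (by positivity) hx2'
    constructor
    · rw [mem_ball_zero_iff]
      have hηn : 1 / (2 * (n : ℝ)) ≤ η := by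
        rw [div_le_iff₀ (by positivity)]
        have h3 : 1 ≤ η * (n : ℝ) := by
          have := mul_le_mul_of_nonneg_left hnη hη0.le
          rwa [mul_inv_cancel₀ hη0.ne'] at this
        nlinarith
      linarith
    · simp only [mem_singleton_iff]
      intro h; rw [h, norm_zero] at hxpos; exact lt_irrefl _ hxpos
  have hAΩ : A ⊆ Ω := by
    rintro x ⟨hx1, -⟩
    rw [mem_ball_zero_iff] at hx1
    apply hball
    rw [mem_ball_zero_iff]
    have : 1 / (2 * (n : ℝ)) ≤ 1 := by
      rw [div_le_one (by positivity)]; linarith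
    linarith
  -- pointwise a.e. lower bound on A
  have hptwise : ∀ᵐ x ∂volume.restrict A,
      ENNReal.ofReal ((n : ℝ) ^ N * K) ≤ ENNReal.ofReal (|testFn p s φ n x| ^ q x) := by
    have hq' : ∀ᵐ x ∂volume.restrict A,
        pCrit s p x - C0 / Real.log (1 / dist x (0 : EucN N)) ≤ q x :=
      ae_restrict_of_ae_restrict_of_subset hAsub hae
    filter_upwards [hq', ae_restrict_mem hAmeas] with x hq hxA
    apply ENNReal.ofReal_le_ofReal
    obtain ⟨hx1, hx2⟩ := hxA
    rw [mem_ball_zero_iff] at hx1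
    have hx2' : 1 / (4 * (n : ℝ)) ≤ ‖x‖ := by
      by_contra h
      exact hx2 (mem_ball_zero_iff.mpr (by linarith))
    have hxpos : 0 < ‖x‖ := lt_of_lt_of_le (by positivity) hx2'
    have hxΩ : x ∈ Ω := by
      apply hball
      rw [mem_ball_zero_iff]
      have : 1 / (2 * (n : ℝ)) ≤ 1 := by
        rw [div_le_one (by positivity)]; linarith
      linarith
    have hxc : x ∈ closure Ω := subset_closure hxΩ
    have ha1 : pm ≤ p x x := by
      rw [hpm]; exact csInf_le hbbp (Set.mem_image2_of_mem hxc hxc)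
    have ha2 : p x x ≤ Sp := le_csSup hbap (Set.mem_image2_of_mem hxc hxc)
    have hb1 : sm ≤ s x x := by
      rw [hsm]; exact csInf_le hbbs (Set.mem_image2_of_mem hxc hxc)
    have hb2 : s x x ≤ Ss := le_csSup hbas (Set.mem_image2_of_mem hxc hxc)
    have hapos : 0 < p x x := by linarith
    have hbpos : 0 < s x x := by linarith
    have hab : p x x * s x x < (N : ℝ) :=
      lt_of_le_of_lt (mul_le_mul ha2 hb2 hbpos.le (by linarith)) hprod
    -- the test function on A
    have hφx : φ ((n : ℝ) • x) = 1 := by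
      apply hφ1
      rw [mem_ball_zero_iff, norm_smul, Real.norm_eq_abs, abs_of_pos hnpos]
      have h4 : (n : ℝ) * ‖x‖ < (n : ℝ) * (1 / (2 * (n : ℝ))) :=
        mul_lt_mul_of_pos_left hx1 hnpos
      have h5 : (n : ℝ) * (1 / (2 * (n : ℝ))) = 1 / 2 := by field_simp
      linarith
    have htest : testFn p s φ n x = (n : ℝ) ^ (((N : ℝ) - p x x * s x x) / p x x) := by
      rw [testFn, hφx, mul_one]
    rw [htest, abs_of_pos (Real.rpow_pos_of_pos hnpos _), hKdef]
    have hdx : dist x (0 : EucN N) = ‖x‖ := dist_zero_right x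
    have h2n : (2 : ℝ) * n ≤ 1 / ‖x‖ := by
      rw [le_div_iff₀ hxpos]
      have := (lt_div_iff₀ (by positivity : (0:ℝ) < 2 * (n:ℝ))).mp hx1
      linarith
    have hLlb : Real.log (2 * (n : ℝ)) ≤ Real.log (1 / dist x (0 : EucN N)) := by
      rw [hdx]
      exact Real.log_le_log (by positivity) h2n
    have hLpos : 0 < Real.log (1 / dist x (0 : EucN N)) :=
      lt_of_lt_of_le (Real.log_pos (by linarith)) hLlb
    have hlogn : Real.log (n : ℝ) ≤ Real.log (1 / dist x (0 : EucN N)) :=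
      le_trans (Real.log_le_log hnpos (by linarith)) hLlb
    simp only [pCrit] at hq
    exact pointwise_bound N n pm sm (p x x) (s x x) C0 _ (q x) hpm0 hC0 hs0 ha1 hb1 hab
      hpmsm hn1' hLpos hlogn hq
  -- put everything together
  calc ENNReal.ofReal (K * (volume (ball (0 : EucN N) (1 / 2) \ ball (0 : EucN N) (1 / 4))).toReal)
      = ENNReal.ofReal K * volume (ball (0 : EucN N) (1 / 2) \ ball (0 : EucN N) (1 / 4)) := by
        rw [ENNReal.ofReal_mul hKpos.le, ENNReal.ofReal_toReal hVfin]
    _ = ENNReal.ofReal K * (ENNReal.ofReal ((n : ℝ) ^ N) * volume A) := by rw [hscale]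
    _ = ENNReal.ofReal ((n : ℝ) ^ N * K) * volume A := by
        rw [← mul_assoc, ← ENNReal.ofReal_mul hKpos.le]
        ring_nf
    _ = ∫⁻ _ in A, ENNReal.ofReal ((n : ℝ) ^ N * K) := (setLIntegral_const _ _).symm
    _ ≤ ∫⁻ x in A, ENNReal.ofReal (|testFn p s φ n x| ^ q x) := lintegral_mono_ae hptwise
    _ ≤ ∫⁻ x in Ω, ENNReal.ofReal (|testFn p s φ n x| ^ q x) :=
        lintegral_mono' (Measure.restrict_mono hAΩ le_rfl) le_rfl
end
end

section
/- Let Ω ⊂ ℝ^N be a bounded domain, let s, p : Ω̄×Ω̄ → ℝ be symmetric measurable with 0 < s^- ≤ s^+ < 1 < p^- ≤ p^+ < N/s^+, let α ∈ C(Ω̄) with 0 < α^- ≤ α^+ < N and σ_α(x) := 2N/(2N − α(x)), and let r ∈ C(Ω̄) with 2r^- > p^+. Assume the continuous embeddings W^{s(x,y),p(x,y)}(Ω) ↪ L^{r(x)σ_α^+}(Ω) and W^{s(x,y),p(x,y)}(Ω) ↪ L^{r(x)σ_α^-}(Ω), and assume the Hardy–Littlewood–Sobolev-type bound: there is C_H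 > 0 such that for every u ∈ W^{s(x,y),p(x,y)}(Ω), ∫_Ω∫_Ω |u(x)|^{r(x)}|u(y)|^{r(y)}/|x−y|^{(α(x)+α(y))/2} dx dy ≤ C_H·(‖u‖_{r(x)σ_α^+}^{2r^+} + ‖u‖_{r(x)σ_α^+}^{2r^-} + ‖u‖_{r(x)σ_α^-}^{2r^+} + ‖u‖_{r(x)σ_α^-}^{2r^-}). Then the functional I has a mountain pass geometry: (i) there exist ρ > 0 and d > 0 such that I[u] ≥ d for every u ∈ W_0^{s(x,y),p(x,y)}(Ω) with ‖u‖_{s,p;Ω} = ρ; (ii) for every u ∈ W_0^{s(x,y),p(x,y)}(Ω) that is not almost everywhere zero, there exists t > 1 with ‖tu‖_{s,p;Ω} > ρ and I[tu] < 0. -/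
open MeasureTheory Filter Set Metric Topology
open scoped ENNReal NNReal

noncomputable section

variable {N : ℕ}

section AuxLemmas

open ENNReal

private lemma aux_exp_bounds {c e m M : ℝ} (hc : 0 < c) (h1 : m ≤ e) (h2 : e ≤ M) :
    min (c ^ m) (c ^ M) ≤ c ^ e ∧ c ^ e ≤ max (c ^ m) (c ^ M) := by
  rcases le_total 1 c with h | h
  · exact ⟨le_trans (min_le_left _ _) (Real.rpow_le_rpow_of_exponent_le h h1),
      le_trans (Real.rpow_le_rpow_of_exponent_le h h2) (le_max_right _ _)⟩
  · exact ⟨le_trans (min_le_right _ _) (Real.rpow_le_rpow_of_exponent_ge hc h h2),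
      le_trans (Real.rpow_le_rpow_of_exponent_ge hc h h1) (le_max_left _ _)⟩

private lemma aux_div_weight {Z w m M : ℝ} (hZ : 0 ≤ Z) (hm : 0 < m) (h1 : m ≤ w) (h2 : w ≤ M) :
    m * (Z / w) ≤ Z ∧ Z ≤ M * (Z / w) := by
  have hw : 0 < w := lt_of_lt_of_le hm h1
  constructor
  · calc m * (Z / w) = (m / w) * Z := by ring
      _ ≤ 1 * Z := mul_le_mul_of_nonneg_right ((div_le_one hw).2 h1) hZ
      _ = Z := one_mul Z
  · calc Z = 1 * Z := (one_mul Z).symm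
      _ ≤ (M / w) * Z := mul_le_mul_of_nonneg_right ((one_le_div hw).2 h2) hZ
      _ = M * (Z / w) := by ring

private lemma aux_div_mul {X w D : ℝ} : X / (w * D) = (X / D) / w := by
  rw [div_div, mul_comm]

private lemma dbl_mono {X : Type*} [MeasurableSpace X] {μ : MeasureTheory.Measure X}
    {A : Set X} (hA : MeasurableSet A) {f g : X → X → ℝ≥0∞}
    (h : ∀ x ∈ A, ∀ y ∈ A, f x y ≤ g x y) :
    ∫⁻ x in A, ∫⁻ y in A, f x y ∂μ ∂μ ≤ ∫⁻ x in A, ∫⁻ y in A, g x y ∂μ ∂μ :=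
  MeasureTheory.setLIntegral_mono' hA fun x hx =>
    MeasureTheory.setLIntegral_mono' hA fun y hy => h x hx y hy

private lemma dbl_const_mul {X : Type*} [MeasurableSpace X] {μ : MeasureTheory.Measure X}
    (A : Set X) (c : ℝ≥0∞) (hc : c ≠ ⊤) (f : X → X → ℝ≥0∞) :
    ∫⁻ x in A, ∫⁻ y in A, c * f x y ∂μ ∂μ = c * ∫⁻ x in A, ∫⁻ y in A, f x y ∂μ ∂μ := by
  calc ∫⁻ x in A, ∫⁻ y in A, c * f x y ∂μ ∂μ
      = ∫⁻ x in A, c * ∫⁻ y in A, f x y ∂μ ∂μ :=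
        MeasureTheory.lintegral_congr fun x => MeasureTheory.lintegral_const_mul' c _ hc
    _ = c * ∫⁻ x in A, ∫⁻ y in A, f x y ∂μ ∂μ := MeasureTheory.lintegral_const_mul' c _ hc

end AuxLemmas
section CoreLemmas

open ENNReal MeasureTheory

variable {N : ℕ} {Ω : Set (EucN N)} {s p : EucN N → EucN N → ℝ} {pm pp : ℝ}

/-- pointwise scaling core -/
private lemma key_scale {c : ℝ} (hc : 0 < c) (hpm : 0 < pm) {e : ℝ} (he1 : pm ≤ e) (he2 : e ≤ pp)
    (a w : ℝ) (hw : 0 ≤ w) :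
    ENNReal.ofReal (min (c ^ pm) (c ^ pp)) * ENNReal.ofReal (|a| ^ e * w) ≤
        ENNReal.ofReal (|c * a| ^ e * w) ∧
      ENNReal.ofReal (|c * a| ^ e * w) ≤
        ENNReal.ofReal (max (c ^ pm) (c ^ pp)) * ENNReal.ofReal (|a| ^ e * w) := by
  have hm0 : 0 ≤ min (c ^ pm) (c ^ pp) :=
    le_min (Real.rpow_pos_of_pos hc _).le (Real.rpow_pos_of_pos hc _).le
  have hM0 : 0 ≤ max (c ^ pm) (c ^ pp) :=
    le_trans (Real.rpow_pos_of_pos hc pm).le (le_max_left _ _)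
  have h1 : |c * a| ^ e = c ^ e * |a| ^ e := by
    rw [abs_mul, abs_of_pos hc, Real.mul_rpow hc.le (abs_nonneg a)]
  have hZ : 0 ≤ |a| ^ e * w := mul_nonneg (Real.rpow_nonneg (abs_nonneg a) e) hw
  have hb := aux_exp_bounds hc he1 he2
  rw [h1, mul_assoc]
  constructor
  · rw [← ENNReal.ofReal_mul hm0]
    exact ENNReal.ofReal_le_ofReal (mul_le_mul_of_nonneg_right hb.1 hZ)
  · rw [← ENNReal.ofReal_mul hM0]
    exact ENNReal.ofReal_le_ofReal (mul_le_mul_of_nonneg_right hb.2 hZ)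

private lemma mod_scale (hΩ : MeasurableSet Ω) (hpm : 0 < pm)
    (hpB : ∀ x ∈ Ω, ∀ y ∈ Ω, pm ≤ p x y ∧ p x y ≤ pp) {c : ℝ} (hc : 0 < c) (u : EucN N → ℝ) :
    ENNReal.ofReal (min (c ^ pm) (c ^ pp)) * sobModular Ω s p u ≤
        sobModular Ω s p (fun x => c * u x) ∧
      sobModular Ω s p (fun x => c * u x) ≤
        ENNReal.ofReal (max (c ^ pm) (c ^ pp)) * sobModular Ω s p u := by
  set m := min (c ^ pm) (c ^ pp) with hmdef
  set M := max (c ^ pm) (c ^ pp) with hMdef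
  have key1 : ∀ x ∈ Ω, ∀ y ∈ Ω,
      ENNReal.ofReal m * ENNReal.ofReal
          (|u x - u y| ^ p x y / dist x y ^ ((N : ℝ) + s x y * p x y)) ≤
        ENNReal.ofReal (|c * u x - c * u y| ^ p x y / dist x y ^ ((N : ℝ) + s x y * p x y)) ∧
      ENNReal.ofReal (|c * u x - c * u y| ^ p x y / dist x y ^ ((N : ℝ) + s x y * p x y)) ≤
        ENNReal.ofReal M * ENNReal.ofReal
          (|u x - u y| ^ p x y / dist x y ^ ((N : ℝ) + s x y * p x y)) := by
    intro x hx y hy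
    have hw : (0:ℝ) ≤ (dist x y ^ ((N : ℝ) + s x y * p x y))⁻¹ :=
      inv_nonneg.2 (Real.rpow_nonneg dist_nonneg _)
    have := key_scale hc hpm (hpB x hx y hy).1 (hpB x hx y hy).2 (u x - u y)
      (dist x y ^ ((N : ℝ) + s x y * p x y))⁻¹ hw
    rw [mul_sub] at this
    simpa [div_eq_mul_inv, hmdef, hMdef] using this
  have key2 : ∀ x ∈ Ω,
      ENNReal.ofReal m * ENNReal.ofReal (|u x| ^ p x x) ≤
        ENNReal.ofReal (|c * u x| ^ p x x) ∧
      ENNReal.ofReal (|c * u x| ^ p x x) ≤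
        ENNReal.ofReal M * ENNReal.ofReal (|u x| ^ p x x) := by
    intro x hx
    have := key_scale hc hpm (hpB x hx x hx).1 (hpB x hx x hx).2 (u x) 1 zero_le_one
    simpa [hmdef, hMdef] using this
  unfold sobModular
  constructor
  · rw [mul_add, ← dbl_const_mul Ω _ ENNReal.ofReal_ne_top,
      ← lintegral_const_mul' _ _ ENNReal.ofReal_ne_top]
    exact add_le_add (dbl_mono hΩ fun x hx y hy => (key1 x hx y hy).1)
      (setLIntegral_mono' hΩ fun x hx => (key2 x hx).1)
  · rw [mul_add, ← dbl_const_mul Ω _ ENNReal.ofReal_ne_top,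
      ← lintegral_const_mul' _ _ ENNReal.ofReal_ne_top]
    exact add_le_add (dbl_mono hΩ fun x hx y hy => (key1 x hx y hy).2)
      (setLIntegral_mono' hΩ fun x hx => (key2 x hx).2)

end CoreLemmas
section NormLemmas

open ENNReal MeasureTheory

variable {N : ℕ} {Ω : Set (EucN N)} {s p : EucN N → EucN N → ℝ} {pm pp : ℝ}

private lemma sobNorm_set_nonempty {u : EucN N → ℝ} (h : sobNorm Ω s p u ≠ ⊤) :
    ∃ l : ℝ≥0∞, 0 < l ∧ l ≠ ⊤ ∧ sobModular Ω s p (fun x => u x / l.toReal) ≤ 1 := by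
  by_contra h'
  push_neg at h'
  apply h
  show sInf _ = ⊤
  rw [show {l : ℝ≥0∞ | 0 < l ∧ l ≠ ⊤ ∧ sobModular Ω s p (fun x => u x / l.toReal) ≤ 1} = ∅ by
    ext l; simp only [Set.mem_setOf_eq, Set.mem_empty_iff_false, iff_false]
    rintro ⟨h1, h2, h3⟩; exact absurd h3 (by simpa using (h' l h1 h2).not_ge), sInf_empty]

private lemma mod_finite_of (hΩ : MeasurableSet Ω) (hpm : 0 < pm)
    (hpB : ∀ x ∈ Ω, ∀ y ∈ Ω, pm ≤ p x y ∧ p x y ≤ pp) (u : EucN N → ℝ)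
    (h : sobNorm Ω s p u ≠ ⊤) : sobModular Ω s p u ≠ ⊤ := by
  obtain ⟨l, hl0, hlT, hlm⟩ := sobNorm_set_nonempty h
  have hlam : 0 < l.toReal := ENNReal.toReal_pos hl0.ne' hlT
  have hfe : u = fun x => l.toReal * (u x / l.toReal) := funext fun x => by
    rw [mul_div_cancel₀ _ hlam.ne']
  have hle : sobModular Ω s p u ≤
      ENNReal.ofReal (max (l.toReal ^ pm) (l.toReal ^ pp)) * 1 := by
    calc sobModular Ω s p u
        = sobModular Ω s p (fun x => l.toReal * (u x / l.toReal)) := by rw [← hfe]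
      _ ≤ ENNReal.ofReal (max (l.toReal ^ pm) (l.toReal ^ pp)) *
            sobModular Ω s p (fun x => u x / l.toReal) := (mod_scale hΩ hpm hpB hlam _).2
      _ ≤ _ := mul_le_mul_right hlm _
  exact ne_top_of_le_ne_top (by simp) hle

private lemma norm_one_le (hΩ : MeasurableSet Ω) (hpm : 0 < pm) (hpmpp : pm ≤ pp)
    (hpB : ∀ x ∈ Ω, ∀ y ∈ Ω, pm ≤ p x y ∧ p x y ≤ pp) (u : EucN N → ℝ)
    (h : 1 < sobModular Ω s p u) : 1 ≤ sobNorm Ω s p u := by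
  by_contra hlt
  push_neg at hlt
  obtain ⟨l, hlS, hl1⟩ := sInf_lt_iff.mp hlt
  obtain ⟨hl0, hlT, hlm⟩ := hlS
  have hlam : 0 < l.toReal := ENNReal.toReal_pos hl0.ne' hlT
  have hlam1 : l.toReal < 1 := by
    rw [← ENNReal.toReal_one]
    exact (ENNReal.toReal_lt_toReal hlT ENNReal.one_ne_top).mpr hl1
  have hfe : u = fun x => l.toReal * (u x / l.toReal) := funext fun x => by
    rw [mul_div_cancel₀ _ hlam.ne']
  have : sobModular Ω s p u ≤ 1 := by
    calc sobModular Ω s p u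
        = sobModular Ω s p (fun x => l.toReal * (u x / l.toReal)) := by rw [← hfe]
      _ ≤ ENNReal.ofReal (max (l.toReal ^ pm) (l.toReal ^ pp)) *
            sobModular Ω s p (fun x => u x / l.toReal) := (mod_scale hΩ hpm hpB hlam _).2
      _ ≤ 1 * 1 := by
          refine mul_le_mul' ?_ hlm
          refine ENNReal.ofReal_le_one.mpr (max_le ?_ ?_) <;>
            exact Real.rpow_le_one hlam.le hlam1.le (by linarith)
      _ = 1 := one_mul 1
  exact absurd h this.not_gt

private lemma norm_scale_ne_top (u : EucN N → ℝ) {t : ℝ} (ht : 0 < t)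
    (h : sobNorm Ω s p u ≠ ⊤) : sobNorm Ω s p (fun x => t * u x) ≠ ⊤ := by
  obtain ⟨l, hl0, hlT, hlm⟩ := sobNorm_set_nonempty h
  have hlam : 0 < l.toReal := ENNReal.toReal_pos hl0.ne' hlT
  have hmem : ENNReal.ofReal (t * l.toReal) ∈
      {l' : ℝ≥0∞ | 0 < l' ∧ l' ≠ ⊤ ∧
        sobModular Ω s p (fun x => (t * u x) / l'.toReal) ≤ 1} := by
    refine ⟨ENNReal.ofReal_pos.2 (by positivity), ENNReal.ofReal_ne_top, ?_⟩
    have hfe : (fun x => (t * u x) / (ENNReal.ofReal (t * l.toReal)).toReal) =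
        fun x => u x / l.toReal := funext fun x => by
      rw [ENNReal.toReal_ofReal (by positivity), mul_div_mul_left _ _ ht.ne']
    rw [hfe]; exact hlm
  exact ne_top_of_le_ne_top ENNReal.ofReal_ne_top (sInf_le hmem)

end NormLemmas
section TermLemmas

open ENNReal MeasureTheory

variable {N : ℕ}

private def termA (Ω : Set (EucN N)) (s p : EucN N → EucN N → ℝ) (u : EucN N → ℝ) : ℝ≥0∞ :=
  ∫⁻ x in Ω, ∫⁻ y in Ω,
    ENNReal.ofReal (|u x - u y| ^ p x y / (p x y * dist x y ^ ((N : ℝ) + s x y * p x y)))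

private def termB (Ω : Set (EucN N)) (p : EucN N → EucN N → ℝ) (u : EucN N → ℝ) : ℝ≥0∞ :=
  ∫⁻ x in Ω, ENNReal.ofReal (|u x| ^ p x x / p x x)

private def termC (Ω : Set (EucN N)) (α r : EucN N → ℝ) (u : EucN N → ℝ) : ℝ≥0∞ :=
  ∫⁻ x in Ω, ∫⁻ y in Ω,
    ENNReal.ofReal (|u x| ^ r x * |u y| ^ r y / (2 * r x * dist x y ^ ((α x + α y) / 2)))

private lemma energyI_eq (Ω : Set (EucN N)) (s p : EucN N → EucN N → ℝ) (α r : EucN N → ℝ)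
    (u : EucN N → ℝ) :
    energyI Ω s p α r u = (termA Ω s p u).toReal + (termB Ω p u).toReal
      - (termC Ω α r u).toReal := rfl

variable {Ω : Set (EucN N)} {s p : EucN N → EucN N → ℝ} {pm pp : ℝ}

private lemma termAB_bounds (hΩ : MeasurableSet Ω) (hpm : 0 < pm)
    (hpB : ∀ x ∈ Ω, ∀ y ∈ Ω, pm ≤ p x y ∧ p x y ≤ pp) (u : EucN N → ℝ) :
    ENNReal.ofReal pm * (termA Ω s p u + termB Ω p u) ≤ sobModular Ω s p u ∧
      sobModular Ω s p u ≤ ENNReal.ofReal pp * (termA Ω s p u + termB Ω p u) := by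
  have key1 : ∀ x ∈ Ω, ∀ y ∈ Ω,
      ENNReal.ofReal pm * ENNReal.ofReal
          (|u x - u y| ^ p x y / (p x y * dist x y ^ ((N : ℝ) + s x y * p x y))) ≤
        ENNReal.ofReal (|u x - u y| ^ p x y / dist x y ^ ((N : ℝ) + s x y * p x y)) ∧
      ENNReal.ofReal (|u x - u y| ^ p x y / dist x y ^ ((N : ℝ) + s x y * p x y)) ≤
        ENNReal.ofReal pp * ENNReal.ofReal
          (|u x - u y| ^ p x y / (p x y * dist x y ^ ((N : ℝ) + s x y * p x y))) := by
    intro x hx y hy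
    have hZ : (0:ℝ) ≤ |u x - u y| ^ p x y / dist x y ^ ((N : ℝ) + s x y * p x y) :=
      div_nonneg (Real.rpow_nonneg (abs_nonneg _) _) (Real.rpow_nonneg dist_nonneg _)
    have hd := aux_div_weight hZ hpm (hpB x hx y hy).1 (hpB x hx y hy).2
    rw [aux_div_mul]
    constructor
    · rw [← ENNReal.ofReal_mul hpm.le]
      exact ENNReal.ofReal_le_ofReal hd.1
    · rw [← ENNReal.ofReal_mul (le_trans hpm.le (le_trans (hpB x hx y hy).1 (hpB x hx y hy).2))]
      exact ENNReal.ofReal_le_ofReal hd.2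
  have key2 : ∀ x ∈ Ω,
      ENNReal.ofReal pm * ENNReal.ofReal (|u x| ^ p x x / p x x) ≤
        ENNReal.ofReal (|u x| ^ p x x) ∧
      ENNReal.ofReal (|u x| ^ p x x) ≤
        ENNReal.ofReal pp * ENNReal.ofReal (|u x| ^ p x x / p x x) := by
    intro x hx
    have hZ : (0:ℝ) ≤ |u x| ^ p x x := Real.rpow_nonneg (abs_nonneg _) _
    have hd := aux_div_weight hZ hpm (hpB x hx x hx).1 (hpB x hx x hx).2
    constructor
    · rw [← ENNReal.ofReal_mul hpm.le]
      exact ENNReal.ofReal_le_ofReal hd.1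
    · rw [← ENNReal.ofReal_mul (le_trans hpm.le (le_trans (hpB x hx x hx).1 (hpB x hx x hx).2))]
      exact ENNReal.ofReal_le_ofReal hd.2
  unfold sobModular termA termB
  constructor
  · rw [mul_add, ← dbl_const_mul Ω _ ENNReal.ofReal_ne_top,
      ← lintegral_const_mul' _ _ ENNReal.ofReal_ne_top]
    exact add_le_add (dbl_mono hΩ fun x hx y hy => (key1 x hx y hy).1)
      (setLIntegral_mono' hΩ fun x hx => (key2 x hx).1)
  · rw [mul_add, ← dbl_const_mul Ω _ ENNReal.ofReal_ne_top,
      ← lintegral_const_mul' _ _ ENNReal.ofReal_ne_top]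
    exact add_le_add (dbl_mono hΩ fun x hx y hy => (key1 x hx y hy).2)
      (setLIntegral_mono' hΩ fun x hx => (key2 x hx).2)

private lemma termC_bounds (hΩ : MeasurableSet Ω) {α r : EucN N → ℝ} {rm rp : ℝ}
    (hrm : 0 < rm) (hrB : ∀ x ∈ Ω, rm ≤ r x ∧ r x ≤ rp) (u : EucN N → ℝ) :
    ENNReal.ofReal (2 * rm) * termC Ω α r u ≤ choquardE Ω α r u ∧
      choquardE Ω α r u ≤ ENNReal.ofReal (2 * rp) * termC Ω α r u := by
  have key : ∀ x ∈ Ω, ∀ _ : EucN N,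
      True := fun _ _ _ => trivial
  have key1 : ∀ x ∈ Ω, ∀ y ∈ Ω,
      ENNReal.ofReal (2 * rm) * ENNReal.ofReal
          (|u x| ^ r x * |u y| ^ r y / (2 * r x * dist x y ^ ((α x + α y) / 2))) ≤
        ENNReal.ofReal (|u x| ^ r x * |u y| ^ r y / dist x y ^ ((α x + α y) / 2)) ∧
      ENNReal.ofReal (|u x| ^ r x * |u y| ^ r y / dist x y ^ ((α x + α y) / 2)) ≤
        ENNReal.ofReal (2 * rp) * ENNReal.ofReal
          (|u x| ^ r x * |u y| ^ r y / (2 * r x * dist x y ^ ((α x + α y) / 2))) := by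
    intro x hx y hy
    have hZ : (0:ℝ) ≤ |u x| ^ r x * |u y| ^ r y / dist x y ^ ((α x + α y) / 2) :=
      div_nonneg (mul_nonneg (Real.rpow_nonneg (abs_nonneg _) _)
        (Real.rpow_nonneg (abs_nonneg _) _)) (Real.rpow_nonneg dist_nonneg _)
    have hd := aux_div_weight hZ (by linarith : (0:ℝ) < 2 * rm)
      (by linarith [(hrB x hx).1] : 2 * rm ≤ 2 * r x)
      (by linarith [(hrB x hx).2] : 2 * r x ≤ 2 * rp)
    rw [aux_div_mul]
    constructor
    · rw [← ENNReal.ofReal_mul (by linarith)]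
      exact ENNReal.ofReal_le_ofReal hd.1
    · rw [← ENNReal.ofReal_mul (by linarith [(hrB x hx).1, (hrB x hx).2])]
      exact ENNReal.ofReal_le_ofReal hd.2
  unfold choquardE termC
  constructor
  · rw [← dbl_const_mul Ω _ ENNReal.ofReal_ne_top]
    exact dbl_mono hΩ fun x hx y hy => (key1 x hx y hy).1
  · rw [← dbl_const_mul Ω _ ENNReal.ofReal_ne_top]
    exact dbl_mono hΩ fun x hx y hy => (key1 x hx y hy).2

private lemma choq_scale (hΩ : MeasurableSet Ω) {α r : EucN N → ℝ} {rm : ℝ}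
    (hrB : ∀ x ∈ Ω, rm ≤ r x) {t : ℝ} (ht : 1 ≤ t) (u : EucN N → ℝ) :
    ENNReal.ofReal (t ^ (2 * rm)) * choquardE Ω α r u ≤
      choquardE Ω α r (fun x => t * u x) := by
  have ht0 : 0 < t := lt_of_lt_of_le one_pos ht
  have key1 : ∀ x ∈ Ω, ∀ y ∈ Ω,
      ENNReal.ofReal (t ^ (2 * rm)) * ENNReal.ofReal
          (|u x| ^ r x * |u y| ^ r y / dist x y ^ ((α x + α y) / 2)) ≤
        ENNReal.ofReal (|t * u x| ^ r x * |t * u y| ^ r y / dist x y ^ ((α x + α y) / 2)) := by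
    intro x hx y hy
    have hZ : (0:ℝ) ≤ |u x| ^ r x * |u y| ^ r y / dist x y ^ ((α x + α y) / 2) :=
      div_nonneg (mul_nonneg (Real.rpow_nonneg (abs_nonneg _) _)
        (Real.rpow_nonneg (abs_nonneg _) _)) (Real.rpow_nonneg dist_nonneg _)
    have h1 : |t * u x| ^ r x * |t * u y| ^ r y / dist x y ^ ((α x + α y) / 2) =
        t ^ (r x + r y) * (|u x| ^ r x * |u y| ^ r y / dist x y ^ ((α x + α y) / 2)) := by
      rw [abs_mul, abs_mul, abs_of_pos ht0, Real.mul_rpow ht0.le (abs_nonneg _),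
        Real.mul_rpow ht0.le (abs_nonneg _), Real.rpow_add ht0]
      ring
    have h2 : t ^ (2 * rm) ≤ t ^ (r x + r y) :=
      Real.rpow_le_rpow_of_exponent_le ht (by linarith [hrB x hx, hrB y hy])
    rw [h1, ← ENNReal.ofReal_mul (Real.rpow_nonneg ht0.le _)]
    exact ENNReal.ofReal_le_ofReal
      (mul_le_mul_of_nonneg_right h2 hZ)
  unfold choquardE
  rw [← dbl_const_mul Ω _ ENNReal.ofReal_ne_top]
  exact dbl_mono hΩ key1

end TermLemmas
section LevelSet

open ENNReal MeasureTheory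

private lemma exists_level_set {N : ℕ} {Ω : Set (EucN N)} (hΩ : MeasurableSet Ω)
    {u : EucN N → ℝ} (hu : Measurable u)
    (h : ¬ ∀ᵐ x ∂(volume.restrict Ω), u x = 0) :
    ∃ δ : ℝ, 0 < δ ∧ ∃ E : Set (EucN N), MeasurableSet E ∧ E ⊆ Ω ∧ 0 < volume E ∧
      ∀ x ∈ E, δ ≤ |u x| := by
  have h0 : (volume.restrict Ω) {x | u x ≠ 0} ≠ 0 := by
    rw [MeasureTheory.ae_iff] at h
    simpa using h
  have hsub : {x | u x ≠ 0} ⊆ ⋃ n : ℕ, {x | 1 / ((n : ℝ) + 1) ≤ |u x|} := by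
    intro x hx
    obtain ⟨n, hn⟩ := exists_nat_one_div_lt (abs_pos.2 hx)
    exact Set.mem_iUnion.2 ⟨n, hn.le⟩
  have hex : ∃ n : ℕ, (volume.restrict Ω) {x | 1 / ((n : ℝ) + 1) ≤ |u x|} ≠ 0 := by
    by_contra hall
    push_neg at hall
    exact h0 (measure_mono_null hsub (measure_iUnion_null hall))
  obtain ⟨n, hn⟩ := hex
  refine ⟨1 / ((n : ℝ) + 1), by positivity, Ω ∩ {x | 1 / ((n : ℝ) + 1) ≤ |u x|},
    hΩ.inter (measurableSet_le measurable_const hu.abs), Set.inter_subset_left, ?_,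
    fun x hx => hx.2⟩
  rw [pos_iff_ne_zero]
  intro hz
  apply hn
  rw [Measure.restrict_apply (measurableSet_le measurable_const hu.abs)]
  rwa [Set.inter_comm] at hz

end LevelSet
set_option maxHeartbeats 1000000 in
/-- the energy functional `I` has a mountain pass geometry. -/
theorem stmt17 {N : ℕ} (Ω : Set (EucN N)) (hopen : IsOpen Ω) (hconn : IsConnected Ω)
    (hbdd : Bornology.IsBounded Ω)
    (s p : EucN N → EucN N → ℝ) (hssymm : SymmFun s) (hpsymm : SymmFun p)
    (hsmeas : Measurable (fun z : EucN N × EucN N => s z.1 z.2))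
    (hpmeas : Measurable (fun z : EucN N × EucN N => p z.1 z.2))
    (hs0 : 0 < inf2 (closure Ω) s) (hs2 : inf2 (closure Ω) s ≤ sup2 (closure Ω) s)
    (hs1 : sup2 (closure Ω) s < 1)
    (hp1 : 1 < inf2 (closure Ω) p) (hp2 : inf2 (closure Ω) p ≤ sup2 (closure Ω) p)
    (hpN : sup2 (closure Ω) p < (N : ℝ) / sup2 (closure Ω) s)
    (α : EucN N → ℝ) (hαc : ContinuousOn α (closure Ω))
    (hα0 : 0 < inf1 (closure Ω) α) (hα2 : inf1 (closure Ω) α ≤ sup1 (closure Ω) α)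
    (hα1 : sup1 (closure Ω) α < (N : ℝ))
    (r : EucN N → ℝ) (hrc : ContinuousOn r (closure Ω))
    (hr1 : 1 ≤ inf1 (closure Ω) r) (hrp : sup2 (closure Ω) p < 2 * inf1 (closure Ω) r)
    (hembp : ∃ C > 0, ∀ u : EucN N → ℝ, MemW Ω s p u →
      luxNorm Ω (fun x => r x * sup1 (closure Ω) (fun y => 2 * N / (2 * N - α y))) u ≤
        ENNReal.ofReal C * sobNorm Ω s p u)
    (hembm : ∃ C > 0, ∀ u : EucN N → ℝ, MemW Ω s p u →
      luxNorm Ω (fun x => r x * inf1 (closure Ω) (fun y => 2 * N / (2 * N - α y))) u ≤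
        ENNReal.ofReal C * sobNorm Ω s p u)
    (CH : ℝ) (hCH : 0 < CH)
    (hHLS : ∀ u : EucN N → ℝ, MemW Ω s p u →
      choquardE Ω α r u ≤ ENNReal.ofReal (CH *
        ((luxNorm Ω (fun x => r x * sup1 (closure Ω) (fun y => 2 * N / (2 * N - α y))) u).toReal
            ^ (2 * sup1 (closure Ω) r) +
         (luxNorm Ω (fun x => r x * sup1 (closure Ω) (fun y => 2 * N / (2 * N - α y))) u).toReal
            ^ (2 * inf1 (closure Ω) r) +
         (luxNorm Ω (fun x => r x * inf1 (closure Ω) (fun y => 2 * N / (2 * N - α y))) u).toReal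
            ^ (2 * sup1 (closure Ω) r) +
         (luxNorm Ω (fun x => r x * inf1 (closure Ω) (fun y => 2 * N / (2 * N - α y))) u).toReal
            ^ (2 * inf1 (closure Ω) r)))) :
    ∃ ρ > 0, ∃ d > 0,
      (∀ u : EucN N → ℝ, MemW0 Ω s p u → sobNorm Ω s p u = ENNReal.ofReal ρ →
        d ≤ energyI Ω s p α r u) ∧
      (∀ u : EucN N → ℝ, MemW0 Ω s p u → ¬ (∀ᵐ x ∂(volume.restrict Ω), u x = 0) →
        ∃ t : ℝ, 1 < t ∧ ENNReal.ofReal ρ < sobNorm Ω s p (fun x => t * u x) ∧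
          energyI Ω s p α r (fun x => t * u x) < 0) := by
  classical
  have hΩm : MeasurableSet Ω := hopen.measurableSet
  obtain ⟨x0, hx0⟩ : Ω.Nonempty := hconn.nonempty
  have hKx0 : x0 ∈ closure Ω := subset_closure hx0
  have hcomp : IsCompact (closure Ω) := hbdd.isCompact_closure
  set pm := inf2 (closure Ω) p with hpm_def
  set pp := sup2 (closure Ω) p with hpp_def
  set rm := inf1 (closure Ω) r with hrm_def
  set rp := sup1 (closure Ω) r with hrp_def
  set am := inf1 (closure Ω) α with ham_def
  set ap := sup1 (closure Ω) α with hap_def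
  -- pointwise bounds for p
  have hPbb : BddBelow (Set.image2 p (closure Ω) (closure Ω)) := by
    by_contra hb
    rw [hpm_def, inf2, Real.sInf_of_not_bddBelow hb] at hp1
    linarith
  have hPba : BddAbove (Set.image2 p (closure Ω) (closure Ω)) := by
    by_contra hb
    rw [hpp_def, sup2, Real.sSup_of_not_bddAbove hb] at hp2
    linarith
  have hpB : ∀ x ∈ Ω, ∀ y ∈ Ω, pm ≤ p x y ∧ p x y ≤ pp := by
    intro x hx y hy
    constructor
    · rw [hpm_def, inf2]
      exact csInf_le hPbb (Set.mem_image2_of_mem (subset_closure hx) (subset_closure hy))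
    · rw [hpp_def, sup2]
      exact le_csSup hPba (Set.mem_image2_of_mem (subset_closure hx) (subset_closure hy))
  -- pointwise bounds for r
  have hRbb : BddBelow (r '' closure Ω) := by
    by_contra hb
    rw [hrm_def, inf1, Real.sInf_of_not_bddBelow hb] at hr1
    linarith
  have hRba : BddAbove (r '' closure Ω) := (hcomp.image_of_continuousOn hrc).bddAbove
  have hrB : ∀ x ∈ Ω, rm ≤ r x ∧ r x ≤ rp := by
    intro x hx
    constructor
    · rw [hrm_def, inf1]
      exact csInf_le hRbb (Set.mem_image_of_mem r (subset_closure hx))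
    · rw [hrp_def, sup1]
      exact le_csSup hRba (Set.mem_image_of_mem r (subset_closure hx))
  -- pointwise bounds for α
  have hAbb : BddBelow (α '' closure Ω) := by
    by_contra hb
    rw [ham_def, inf1, Real.sInf_of_not_bddBelow hb] at hα0
    linarith
  have hAba : BddAbove (α '' closure Ω) := (hcomp.image_of_continuousOn hαc).bddAbove
  have hαB : ∀ x ∈ Ω, am ≤ α x ∧ α x ≤ ap := by
    intro x hx
    constructor
    · rw [ham_def, inf1]
      exact csInf_le hAbb (Set.mem_image_of_mem α (subset_closure hx))
    · rw [hap_def, sup1]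
      exact le_csSup hAba (Set.mem_image_of_mem α (subset_closure hx))
  -- numeric facts
  have hpm0 : (0:ℝ) < pm := lt_trans one_pos hp1
  have hpp0 : (0:ℝ) < pp := lt_of_lt_of_le hpm0 hp2
  have hrm0 : (0:ℝ) < rm := lt_of_lt_of_le one_pos hr1
  have hrmrp : rm ≤ rp := le_trans (hrB x0 hx0).1 (hrB x0 hx0).2
  have hrp0 : (0:ℝ) < rp := lt_of_lt_of_le hrm0 hrmrp
  have he' : (0:ℝ) < 2 * rm - pp := by linarith
  -- constants
  obtain ⟨Cp, hCp0, hEp⟩ := hembp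
  obtain ⟨Cm, hCm0, hEm⟩ := hembm
  set M := max 1 (max Cp Cm) with hM_def
  have hM1 : (1:ℝ) ≤ M := le_max_left _ _
  have hM0 : (0:ℝ) < M := lt_of_lt_of_le one_pos hM1
  set T := (2:ℝ) ^ pp with hT_def
  have hT0 : (0:ℝ) < T := Real.rpow_pos_of_pos two_pos _
  set Mr := M ^ (2 * rm) with hMr_def
  have hMr0 : (0:ℝ) < Mr := Real.rpow_pos_of_pos hM0 _
  set c₀ := rm / (CH * Mr * T * pp * 4) with hc₀_def
  have hc₀0 : (0:ℝ) < c₀ := by positivity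
  set ρ := min (1/2) (min (1/(2*M)) (c₀ ^ (1/(2*rm - pp)))) with hρ_def
  have hρ0 : (0:ℝ) < ρ := by
    refine lt_min (by norm_num) (lt_min (by positivity) (Real.rpow_pos_of_pos hc₀0 _))
  have hρhalf : ρ ≤ 1/2 := min_le_left _ _
  have hρ1 : ρ < 1 := by linarith
  have hρM : M * ρ ≤ 1/2 := by
    have h1 : ρ ≤ 1/(2*M) := le_trans (min_le_right _ _) (min_le_left _ _)
    calc M * ρ ≤ M * (1/(2*M)) := mul_le_mul_of_nonneg_left h1 hM0.le
      _ = 1/2 := by field_simp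
  have hρe : ρ ^ (2*rm - pp) ≤ c₀ := by
    have h1 : ρ ≤ c₀ ^ (1/(2*rm - pp)) := le_trans (min_le_right _ _) (min_le_right _ _)
    calc ρ ^ (2*rm - pp) ≤ (c₀ ^ (1/(2*rm - pp))) ^ (2*rm - pp) :=
          Real.rpow_le_rpow hρ0.le h1 he'.le
      _ = c₀ := by
          rw [← Real.rpow_mul hc₀0.le, one_div_mul_cancel he'.ne', Real.rpow_one]
  set d := ρ ^ pp / (T * pp * 2) with hd_def
  have hd0 : (0:ℝ) < d := by
    have := Real.rpow_pos_of_pos hρ0 pp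
    positivity
  have hofpm : (ENNReal.ofReal pm) ≠ 0 := (ENNReal.ofReal_pos.2 hpm0).ne'
  have hof2rm : (ENNReal.ofReal (2*rm)) ≠ 0 := (ENNReal.ofReal_pos.2 (by linarith)).ne'
  refine ⟨ρ, hρ0, d, hd0, ?_, ?_⟩
  · -- PART (i)
    intro u hu0 hnorm
    have huW := hu0.1
    have huT : sobNorm Ω s p u ≠ ⊤ := huW.2
    have hPfin : sobModular Ω s p u ≠ ⊤ := mod_finite_of hΩm hpm0 hpB u huT
    have hρ2 : (0:ℝ) < ρ/2 := by linarith
    -- modular lower bound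
    have hmod1 : 1 ≤ sobModular Ω s p (fun x => u x / (ρ/2)) := by
      by_contra hlt
      push_neg at hlt
      have hmem : ENNReal.ofReal (ρ/2) ∈ {l : ℝ≥0∞ | 0 < l ∧ l ≠ ⊤ ∧
          sobModular Ω s p (fun x => u x / l.toReal) ≤ 1} := by
        refine ⟨ENNReal.ofReal_pos.2 hρ2, ENNReal.ofReal_ne_top, ?_⟩
        simp only [ENNReal.toReal_ofReal hρ2.le]
        exact hlt.le
      have hle : sobNorm Ω s p u ≤ ENNReal.ofReal (ρ/2) := sInf_le hmem
      rw [hnorm] at hle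
      have := (ENNReal.ofReal_le_ofReal_iff hρ2.le).1 hle
      linarith
    have hlow : ENNReal.ofReal ((ρ/2) ^ pp) ≤ sobModular Ω s p u := by
      have hfe : (fun x => (ρ/2) * (u x / (ρ/2))) = u := funext fun x => by
        rw [mul_div_cancel₀ _ hρ2.ne']
      have h1 := (mod_scale (s := s) hΩm hpm0 hpB hρ2 (fun x => u x / (ρ/2))).1
      rw [hfe] at h1
      have hminq : min ((ρ/2) ^ pm) ((ρ/2) ^ pp) = (ρ/2) ^ pp :=
        min_eq_right (Real.rpow_le_rpow_of_exponent_ge hρ2 (by linarith) hp2)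
      calc ENNReal.ofReal ((ρ/2) ^ pp) = ENNReal.ofReal ((ρ/2) ^ pp) * 1 := (mul_one _).symm
        _ ≤ ENNReal.ofReal (min ((ρ/2) ^ pm) ((ρ/2) ^ pp)) *
              sobModular Ω s p (fun x => u x / (ρ/2)) := by
            rw [hminq]; exact mul_le_mul_right hmod1 _
        _ ≤ sobModular Ω s p u := h1
    have hmodto : (ρ/2) ^ pp ≤ (sobModular Ω s p u).toReal := by
      have := ENNReal.toReal_mono hPfin hlow
      rwa [ENNReal.toReal_ofReal (Real.rpow_nonneg hρ2.le _)] at this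
    -- A + B lower bound
    have hAB := termAB_bounds hΩm hpm0 hpB (s := s) u
    have hABfin : termA Ω s p u + termB Ω p u ≠ ⊤ := by
      intro h
      have h1 := hAB.1
      rw [h, ENNReal.mul_top hofpm] at h1
      exact hPfin (top_le_iff.mp h1)
    have hAfin : termA Ω s p u ≠ ⊤ := (ENNReal.add_ne_top.1 hABfin).1
    have hBfin : termB Ω p u ≠ ⊤ := (ENNReal.add_ne_top.1 hABfin).2
    have hABto : (ρ/2) ^ pp / pp ≤ (termA Ω s p u).toReal + (termB Ω p u).toReal := by
      have h1 := ENNReal.toReal_mono (by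
          exact ENNReal.mul_ne_top ENNReal.ofReal_ne_top hABfin) hAB.2
      rw [ENNReal.toReal_mul, ENNReal.toReal_ofReal hpp0.le, ENNReal.toReal_add hAfin hBfin] at h1
      rw [div_le_iff₀ hpp0]
      calc (ρ/2) ^ pp ≤ (sobModular Ω s p u).toReal := hmodto
        _ ≤ pp * ((termA Ω s p u).toReal + (termB Ω p u).toReal) := h1
        _ = ((termA Ω s p u).toReal + (termB Ω p u).toReal) * pp := mul_comm _ _
    -- C upper bound
    have hQfin : choquardE Ω α r u ≠ ⊤ := ne_top_of_le_ne_top ENNReal.ofReal_ne_top (hHLS u huW)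
    have hC := termC_bounds hΩm (α := α) hrm0 hrB u
    have hCfin : termC Ω α r u ≠ ⊤ := by
      intro h
      have h1 := hC.1
      rw [h, ENNReal.mul_top hof2rm] at h1
      exact hQfin (top_le_iff.mp h1)
    -- bounding luxNorms
    have hlux : ∀ (q : EucN N → ℝ), luxNorm Ω q u ≤ ENNReal.ofReal (M * ρ) →
        ∀ e : ℝ, 2 * rm ≤ e → (luxNorm Ω q u).toReal ^ e ≤ (M * ρ) ^ (2 * rm) := by
      intro q hq e he
      have h0 : (0:ℝ) < M * ρ := by positivity
      have h1 : (luxNorm Ω q u).toReal ≤ M * ρ := by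
        have := ENNReal.toReal_mono ENNReal.ofReal_ne_top hq
        rwa [ENNReal.toReal_ofReal h0.le] at this
      calc (luxNorm Ω q u).toReal ^ e ≤ (M * ρ) ^ e :=
            Real.rpow_le_rpow ENNReal.toReal_nonneg h1 (by linarith)
        _ ≤ (M * ρ) ^ (2 * rm) :=
            Real.rpow_le_rpow_of_exponent_ge h0 (by linarith) he
    have hluxp : luxNorm Ω (fun x => r x * sup1 (closure Ω) (fun y => 2 * N / (2 * N - α y))) u ≤
        ENNReal.ofReal (M * ρ) := by
      calc _ ≤ ENNReal.ofReal Cp * sobNorm Ω s p u := hEp u huW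
        _ = ENNReal.ofReal (Cp * ρ) := by
            rw [hnorm, ← ENNReal.ofReal_mul hCp0.le]
        _ ≤ ENNReal.ofReal (M * ρ) := ENNReal.ofReal_le_ofReal
            (mul_le_mul_of_nonneg_right (le_trans (le_max_left _ _) (le_max_right _ _)) hρ0.le)
    have hluxm : luxNorm Ω (fun x => r x * inf1 (closure Ω) (fun y => 2 * N / (2 * N - α y))) u ≤
        ENNReal.ofReal (M * ρ) := by
      calc _ ≤ ENNReal.ofReal Cm * sobNorm Ω s p u := hEm u huW
        _ = ENNReal.ofReal (Cm * ρ) := by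
            rw [hnorm, ← ENNReal.ofReal_mul hCm0.le]
        _ ≤ ENNReal.ofReal (M * ρ) := ENNReal.ofReal_le_ofReal
            (mul_le_mul_of_nonneg_right (le_trans (le_max_right _ _) (le_max_right _ _)) hρ0.le)
    have hQto : (choquardE Ω α r u).toReal ≤ CH * (4 * (M * ρ) ^ (2 * rm)) := by
      have h1 := ENNReal.toReal_mono ENNReal.ofReal_ne_top (hHLS u huW)
      have hsum0 : (0:ℝ) ≤
          ((luxNorm Ω (fun x => r x * sup1 (closure Ω) (fun y => 2 * N / (2 * N - α y))) u).toReal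
            ^ (2 * rp) +
          (luxNorm Ω (fun x => r x * sup1 (closure Ω) (fun y => 2 * N / (2 * N - α y))) u).toReal
            ^ (2 * rm) +
          (luxNorm Ω (fun x => r x * inf1 (closure Ω) (fun y => 2 * N / (2 * N - α y))) u).toReal
            ^ (2 * rp) +
          (luxNorm Ω (fun x => r x * inf1 (closure Ω) (fun y => 2 * N / (2 * N - α y))) u).toReal
            ^ (2 * rm)) := by positivity
      rw [ENNReal.toReal_ofReal (mul_nonneg hCH.le hsum0)] at h1
      refine le_trans h1 ?_
      have b1 := hlux _ hluxp (2 * rp) (by linarith)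
      have b2 := hlux _ hluxp (2 * rm) le_rfl
      have b3 := hlux _ hluxm (2 * rp) (by linarith)
      have b4 := hlux _ hluxm (2 * rm) le_rfl
      exact mul_le_mul_of_nonneg_left (by linarith) hCH.le
    have hCto : (termC Ω α r u).toReal ≤ CH * (4 * (M * ρ) ^ (2 * rm)) / (2 * rm) := by
      have h1 := ENNReal.toReal_mono hQfin hC.1
      rw [ENNReal.toReal_mul, ENNReal.toReal_ofReal (by linarith : (0:ℝ) ≤ 2*rm)] at h1
      have h2 : (termC Ω α r u).toReal ≤ (choquardE Ω α r u).toReal / (2 * rm) :=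
        (le_div_iff₀' (by linarith)).2 h1
      exact le_trans h2 ((div_le_div_iff_of_pos_right (by linarith)).2 hQto)
    -- final combination
    rw [energyI_eq]
    have hkey : CH * (4 * (M * ρ) ^ (2 * rm)) / (2 * rm) + d ≤ (ρ/2) ^ pp / pp := by
      have hXpos : (0:ℝ) < ρ ^ pp := Real.rpow_pos_of_pos hρ0 pp
      have hMrρ : (M * ρ) ^ (2 * rm) = Mr * (ρ ^ pp * ρ ^ (2*rm - pp)) := by
        rw [Real.mul_rpow hM0.le hρ0.le, ← hMr_def, ← Real.rpow_add hρ0]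
        ring_nf
      have hhalf : (ρ/2) ^ pp = ρ ^ pp / T := by
        rw [Real.div_rpow hρ0.le (by norm_num : (0:ℝ) ≤ 2), ← hT_def]
      rw [hMrρ, hhalf, hd_def]
      have h2 : CH * (4 * (Mr * (ρ ^ pp * ρ ^ (2*rm - pp)))) / (2 * rm) ≤
          CH * (4 * (Mr * (ρ ^ pp * c₀))) / (2 * rm) := by
        gcongr
      have h3 : CH * (4 * (Mr * (ρ ^ pp * c₀))) / (2 * rm) =
          ρ ^ pp / T / pp - ρ ^ pp / (T * pp * 2) := by
        rw [hc₀_def]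
        field_simp
        ring
      linarith only [h2, h3]
    linarith only [hABto, hCto, hkey]
  · -- PART (ii)
    intro u hu0 hne
    have huW := hu0.1
    have hum : Measurable u := huW.1
    have huT : sobNorm Ω s p u ≠ ⊤ := huW.2
    obtain ⟨δ, hδ0, E, hEmeas, hEΩ, hE0, hEδ⟩ := exists_level_set hΩm hum hne
    have hPfin : sobModular Ω s p u ≠ ⊤ := mod_finite_of hΩm hpm0 hpB u huT
    -- modular positivity
    have hP2pos : 0 < ∫⁻ x in Ω, ENNReal.ofReal (|u x| ^ p x x) := by
      have hδδ : (0:ℝ) < min (δ ^ pm) (δ ^ pp) :=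
        lt_min (Real.rpow_pos_of_pos hδ0 _) (Real.rpow_pos_of_pos hδ0 _)
      calc (0:ℝ≥0∞) < ENNReal.ofReal (min (δ ^ pm) (δ ^ pp)) * volume E := by
            exact ENNReal.mul_pos (ENNReal.ofReal_pos.2 hδδ).ne' hE0.ne'
        _ = ∫⁻ _ in E, ENNReal.ofReal (min (δ ^ pm) (δ ^ pp)) := by
            rw [MeasureTheory.setLIntegral_const]
        _ ≤ ∫⁻ x in E, ENNReal.ofReal (|u x| ^ p x x) := by
            refine MeasureTheory.setLIntegral_mono' hEmeas fun x hx => ?_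
            refine ENNReal.ofReal_le_ofReal ?_
            have hxΩ := hEΩ hx
            calc min (δ ^ pm) (δ ^ pp) ≤ δ ^ p x x :=
                  (aux_exp_bounds hδ0 (hpB x hxΩ x hxΩ).1 (hpB x hxΩ x hxΩ).2).1
              _ ≤ |u x| ^ p x x :=
                  Real.rpow_le_rpow hδ0.le (hEδ x hx) (by linarith [(hpB x hxΩ x hxΩ).1])
        _ ≤ ∫⁻ x in Ω, ENNReal.ofReal (|u x| ^ p x x) := lintegral_mono_set hEΩ
    have hPpos : 0 < sobModular Ω s p u := by
      have hsplit : sobModular Ω s p u = (∫⁻ x in Ω, ∫⁻ y in Ω,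
          ENNReal.ofReal (|u x - u y| ^ p x y / dist x y ^ ((N : ℝ) + s x y * p x y))) +
          ∫⁻ x in Ω, ENNReal.ofReal (|u x| ^ p x x) := rfl
      rw [hsplit]
      exact lt_of_lt_of_le hP2pos le_add_self
    set mt := (sobModular Ω s p u).toReal with hmt_def
    have hmt0 : (0:ℝ) < mt := ENNReal.toReal_pos hPpos.ne' hPfin
    -- choquard positivity
    have hN0 : 0 < N := by
      have : (0:ℝ) < (N:ℝ) := lt_trans (lt_of_lt_of_le hα0 hα2) hα1
      exact_mod_cast this
    haveI : Nontrivial (EucN N) := by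
      refine ⟨EuclideanSpace.single ⟨0, hN0⟩ 1, 0, fun he => ?_⟩
      have := congrArg (fun v : EucN N => v ⟨0, hN0⟩) he
      simp [EuclideanSpace.single_apply] at this
    haveI : NullSingletonClass (volume : MeasureTheory.Measure (EucN N)) := inferInstance
    obtain ⟨R, hR⟩ := Metric.isBounded_iff.1 hbdd
    set R' := max 1 R with hR'_def
    have hR'1 : (1:ℝ) ≤ R' := le_max_left _ _
    have hR'0 : (0:ℝ) < R' := lt_of_lt_of_le one_pos hR'1
    set Dm := R' ^ ap with hDm_def
    have hDm0 : (0:ℝ) < Dm := Real.rpow_pos_of_pos hR'0 _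
    have ham0 : (0:ℝ) < am := hα0
    have hdistB : ∀ x ∈ Ω, ∀ y ∈ Ω, dist x y ^ ((α x + α y)/2) ≤ Dm := by
      intro x hx y hy
      have he1 : am ≤ (α x + α y)/2 := by linarith [(hαB x hx).1, (hαB y hy).1]
      have he2 : (α x + α y)/2 ≤ ap := by linarith [(hαB x hx).2, (hαB y hy).2]
      rcases le_total (dist x y) 1 with hd | hd
      · exact le_trans (Real.rpow_le_one dist_nonneg hd (by linarith))
          (Real.one_le_rpow hR'1 (by linarith))
      · calc dist x y ^ ((α x + α y)/2) ≤ dist x y ^ ap :=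
              Real.rpow_le_rpow_of_exponent_le hd he2
          _ ≤ R' ^ ap := Real.rpow_le_rpow dist_nonneg
              (le_trans (hR hx hy) (le_max_right _ _)) (by linarith)
    set δ' := min (δ ^ rm) (δ ^ rp) with hδ'_def
    have hδ'0 : (0:ℝ) < δ' :=
      lt_min (Real.rpow_pos_of_pos hδ0 _) (Real.rpow_pos_of_pos hδ0 _)
    set ε := δ' * δ' / Dm with hε_def
    have hε0 : (0:ℝ) < ε := by positivity
    have hulow : ∀ x ∈ E, δ' ≤ |u x| ^ r x := by
      intro x hx
      have hxΩ := hEΩ hx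
      calc δ' ≤ δ ^ r x := (aux_exp_bounds hδ0 (hrB x hxΩ).1 (hrB x hxΩ).2).1
        _ ≤ |u x| ^ r x := Real.rpow_le_rpow hδ0.le (hEδ x hx) (by linarith [(hrB x hxΩ).1])
    have hinner : ∀ x ∈ E, ENNReal.ofReal ε * volume E ≤
        ∫⁻ y in Ω, ENNReal.ofReal (|u x| ^ r x * |u y| ^ r y / dist x y ^ ((α x + α y)/2)) := by
      intro x hx
      have hxΩ := hEΩ hx
      have step : ∫⁻ _ in E, (ENNReal.ofReal ε) ≤
          ∫⁻ y in E, ENNReal.ofReal (|u x| ^ r x * |u y| ^ r y /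
            dist x y ^ ((α x + α y)/2)) := by
        refine MeasureTheory.lintegral_mono_ae ?_
        have h1 : ∀ᵐ y ∂(volume.restrict E), y ≠ x := by
          refine MeasureTheory.ae_restrict_of_ae ?_
          refine MeasureTheory.ae_iff.2 ?_
          have : {y : EucN N | ¬ y ≠ x} = {x} := by ext z; simp
          rw [this, measure_singleton]
        filter_upwards [h1, MeasureTheory.ae_restrict_mem hEmeas] with y hyx hyE
        refine ENNReal.ofReal_le_ofReal ?_
        have hyΩ := hEΩ hyE
        have hdpos : (0:ℝ) < dist x y ^ ((α x + α y)/2) := by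
          refine Real.rpow_pos_of_pos ?_ _
          exact dist_pos.2 (Ne.symm hyx)
        rw [hε_def]
        have hnum : δ' * δ' ≤ |u x| ^ r x * |u y| ^ r y :=
          mul_le_mul (hulow x hx) (hulow y hyE) hδ'0.le
            (le_trans hδ'0.le (hulow x hx))
        gcongr
        exact hdistB x hxΩ y hyΩ
      calc ENNReal.ofReal ε * volume E = ∫⁻ _ in E, ENNReal.ofReal ε := by
            rw [MeasureTheory.setLIntegral_const]
        _ ≤ _ := step
        _ ≤ _ := lintegral_mono_set hEΩ
    have hc0 : 0 < choquardE Ω α r u := by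
      have hlow : ENNReal.ofReal ε * volume E * volume E ≤ choquardE Ω α r u := by
        unfold choquardE
        calc ENNReal.ofReal ε * volume E * volume E
            = ∫⁻ _ in E, ENNReal.ofReal ε * volume E := by
              rw [MeasureTheory.setLIntegral_const]
          _ ≤ ∫⁻ x in E, ∫⁻ y in Ω, ENNReal.ofReal
                (|u x| ^ r x * |u y| ^ r y / dist x y ^ ((α x + α y)/2)) :=
              MeasureTheory.setLIntegral_mono' hEmeas fun x hx => hinner x hx
          _ ≤ _ := lintegral_mono_set hEΩ
      refine lt_of_lt_of_le ?_ hlow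
      exact (ENNReal.mul_pos (ENNReal.mul_pos (ENNReal.ofReal_pos.2 hε0).ne' hE0.ne').ne'
        hE0.ne')
    have hQfin : choquardE Ω α r u ≠ ⊤ :=
      ne_top_of_le_ne_top ENNReal.ofReal_ne_top (hHLS u huW)
    set ct := (choquardE Ω α r u).toReal with hct_def
    have hct0 : (0:ℝ) < ct := ENNReal.toReal_pos hc0.ne' hQfin
    set M₁ := mt / pm with hM₁_def
    have hM₁0 : (0:ℝ) ≤ M₁ := by positivity
    set M₂ := ct / (2 * rp) with hM₂_def
    have hM₂0 : (0:ℝ) < M₂ := by positivity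
    set t := max 2 (max ((M₁/M₂ + 1) ^ (1/(2*rm-pp))) ((1/mt + 1) ^ (1/pm))) with ht_def
    have ht2 : (2:ℝ) ≤ t := le_max_left _ _
    have ht1 : (1:ℝ) < t := lt_of_lt_of_le one_lt_two ht2
    have ht0 : (0:ℝ) < t := lt_trans one_pos ht1
    have hte : M₁/M₂ + 1 ≤ t ^ (2*rm-pp) := by
      have hb0 : (0:ℝ) ≤ M₁/M₂ + 1 := by positivity
      calc M₁/M₂ + 1 = ((M₁/M₂ + 1) ^ (1/(2*rm-pp))) ^ (2*rm-pp) := by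
            rw [← Real.rpow_mul hb0, one_div_mul_cancel he'.ne', Real.rpow_one]
        _ ≤ t ^ (2*rm-pp) := Real.rpow_le_rpow (Real.rpow_nonneg hb0 _)
            (le_trans (le_max_left _ _) (le_max_right _ _)) he'.le
    have htm : 1/mt + 1 ≤ t ^ pm := by
      have hb0 : (0:ℝ) ≤ 1/mt + 1 := by positivity
      calc 1/mt + 1 = ((1/mt + 1) ^ (1/pm)) ^ pm := by
            rw [← Real.rpow_mul hb0, one_div_mul_cancel hpm0.ne', Real.rpow_one]
        _ ≤ t ^ pm := Real.rpow_le_rpow (Real.rpow_nonneg hb0 _)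
            (le_trans (le_max_right _ _) (le_max_right _ _)) hpm0.le
    -- norm of scaled exceeds ρ
    have hmodtu : 1 < sobModular Ω s p (fun x => t * u x) := by
      have h1 := (mod_scale (s := s) hΩm hpm0 hpB ht0 u).1
      have hminq : min (t ^ pm) (t ^ pp) = t ^ pm :=
        min_eq_left (Real.rpow_le_rpow_of_exponent_le ht1.le hp2)
      rw [hminq] at h1
      have h2 : ENNReal.ofReal (1 + mt) ≤ ENNReal.ofReal (t ^ pm) * sobModular Ω s p u := by
        rw [← ENNReal.ofReal_toReal hPfin, ← hmt_def, ← ENNReal.ofReal_mul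
          (Real.rpow_nonneg ht0.le _)]
        refine ENNReal.ofReal_le_ofReal ?_
        calc 1 + mt = (1/mt + 1) * mt := by field_simp
          _ ≤ t ^ pm * mt := mul_le_mul_of_nonneg_right htm hmt0.le
      calc (1:ℝ≥0∞) < ENNReal.ofReal (1 + mt) := by
            rw [← ENNReal.ofReal_one]
            exact (ENNReal.ofReal_lt_ofReal_iff (by linarith)).2 (by linarith)
        _ ≤ ENNReal.ofReal (t ^ pm) * sobModular Ω s p u := h2
        _ ≤ sobModular Ω s p (fun x => t * u x) := h1
    have hnormtu : ENNReal.ofReal ρ < sobNorm Ω s p (fun x => t * u x) :=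
      lt_of_lt_of_le (by
        rw [← ENNReal.ofReal_one]
        exact (ENNReal.ofReal_lt_ofReal_iff one_pos).2 hρ1)
        (norm_one_le hΩm hpm0 hp2 hpB _ hmodtu)
    -- energy of scaled is negative
    have htuW : MemW Ω s p (fun x => t * u x) :=
      ⟨measurable_const.mul hum, norm_scale_ne_top u ht0 huT⟩
    have hQtfin : choquardE Ω α r (fun x => t * u x) ≠ ⊤ :=
      ne_top_of_le_ne_top ENNReal.ofReal_ne_top (hHLS _ htuW)
    have hABt := termAB_bounds hΩm hpm0 hpB (s := s) (fun x => t * u x)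
    have hPt_le : sobModular Ω s p (fun x => t * u x) ≤ ENNReal.ofReal (t ^ pp * mt) := by
      have h1 := (mod_scale (s := s) hΩm hpm0 hpB ht0 u).2
      have hmaxq : max (t ^ pm) (t ^ pp) = t ^ pp :=
        max_eq_right (Real.rpow_le_rpow_of_exponent_le ht1.le hp2)
      rw [hmaxq] at h1
      calc sobModular Ω s p (fun x => t * u x)
          ≤ ENNReal.ofReal (t ^ pp) * sobModular Ω s p u := h1
        _ = ENNReal.ofReal (t ^ pp * mt) := by
            rw [← ENNReal.ofReal_toReal hPfin, ← hmt_def, ← ENNReal.ofReal_mul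
              (Real.rpow_nonneg ht0.le _)]
    have hPtfin : sobModular Ω s p (fun x => t * u x) ≠ ⊤ :=
      ne_top_of_le_ne_top ENNReal.ofReal_ne_top hPt_le
    have hABtfin : termA Ω s p (fun x => t * u x) + termB Ω p (fun x => t * u x) ≠ ⊤ := by
      intro h
      have h1 := hABt.1
      rw [h, ENNReal.mul_top hofpm] at h1
      exact hPtfin (top_le_iff.mp h1)
    have hAtfin := (ENNReal.add_ne_top.1 hABtfin).1
    have hBtfin := (ENNReal.add_ne_top.1 hABtfin).2
    have hABt_to : (termA Ω s p (fun x => t * u x)).toReal +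
        (termB Ω p (fun x => t * u x)).toReal ≤ t ^ pp * M₁ := by
      have h1 := ENNReal.toReal_mono ENNReal.ofReal_ne_top (le_trans hABt.1 hPt_le)
      rw [ENNReal.toReal_mul, ENNReal.toReal_ofReal hpm0.le,
        ENNReal.toReal_add hAtfin hBtfin, ENNReal.toReal_ofReal
          (mul_nonneg (Real.rpow_nonneg ht0.le _) hmt0.le)] at h1
      calc (termA Ω s p (fun x => t * u x)).toReal + (termB Ω p (fun x => t * u x)).toReal
          ≤ (t ^ pp * mt) / pm := (le_div_iff₀' hpm0).2 h1
        _ = t ^ pp * M₁ := by rw [hM₁_def, mul_div_assoc]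
    have hCt := termC_bounds hΩm (α := α) hrm0 hrB (fun x => t * u x)
    have hCtfin : termC Ω α r (fun x => t * u x) ≠ ⊤ := by
      intro h
      have h1 := hCt.1
      rw [h, ENNReal.mul_top hof2rm] at h1
      exact hQtfin (top_le_iff.mp h1)
    have hCt_to : t ^ (2*rm) * M₂ ≤ (termC Ω α r (fun x => t * u x)).toReal := by
      have hsc := choq_scale hΩm (α := α) (fun x hx => (hrB x hx).1) ht1.le u
      have h1 : ENNReal.ofReal (t ^ (2*rm) * ct) ≤
          ENNReal.ofReal (2 * rp) * termC Ω α r (fun x => t * u x) := by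
        calc ENNReal.ofReal (t ^ (2*rm) * ct)
            = ENNReal.ofReal (t ^ (2*rm)) * choquardE Ω α r u := by
              rw [ENNReal.ofReal_mul (Real.rpow_nonneg ht0.le _), hct_def,
                ENNReal.ofReal_toReal hQfin]
          _ ≤ choquardE Ω α r (fun x => t * u x) := hsc
          _ ≤ _ := hCt.2
      have h2 := ENNReal.toReal_mono (ENNReal.mul_ne_top ENNReal.ofReal_ne_top hCtfin) h1
      rw [ENNReal.toReal_ofReal (mul_nonneg (Real.rpow_nonneg ht0.le _) hct0.le),
        ENNReal.toReal_mul, ENNReal.toReal_ofReal (by linarith : (0:ℝ) ≤ 2*rp)] at h2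
      calc t ^ (2*rm) * M₂ = (t ^ (2*rm) * ct) / (2*rp) := by rw [hM₂_def, mul_div_assoc]
        _ ≤ ((2*rp) * (termC Ω α r (fun x => t * u x)).toReal) / (2*rp) :=
            (div_le_div_iff_of_pos_right (by linarith)).2 h2
        _ = (termC Ω α r (fun x => t * u x)).toReal := by field_simp
    refine ⟨t, ht1, hnormtu, ?_⟩
    rw [energyI_eq]
    have htpp : (0:ℝ) < t ^ pp := Real.rpow_pos_of_pos ht0 _
    have hsplit2 : t ^ (2*rm) = t ^ pp * t ^ (2*rm - pp) := by
      rw [← Real.rpow_add ht0]; ring_nf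
    have hfin : t ^ pp * M₁ - t ^ (2*rm) * M₂ < 0 := by
      have h1 : (M₁/M₂ + 1) * M₂ = M₁ + M₂ := by field_simp
      have h2 : t ^ (2*rm - pp) * M₂ ≥ (M₁/M₂ + 1) * M₂ :=
        mul_le_mul_of_nonneg_right hte hM₂0.le
      rw [h1] at h2
      have h4 : t ^ pp * (M₁ + M₂) ≤ t ^ pp * (t ^ (2*rm - pp) * M₂) :=
        mul_le_mul_of_nonneg_left h2 htpp.le
      have h5 : t ^ pp * (M₁ + M₂) = t ^ pp * M₁ + t ^ pp * M₂ := by ring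
      have h6 : t ^ pp * t ^ (2*rm - pp) * M₂ = t ^ pp * (t ^ (2*rm - pp) * M₂) := by ring
      have h7 : (0:ℝ) < t ^ pp * M₂ := mul_pos htpp hM₂0
      rw [hsplit2]
      linarith only [h4, h5, h6, h7]
    linarith only [hABt_to, hCt_to, hfin]
end
end
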